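/- arXiv:1304.7078 — 9 statements merged into one kernel-verified Lean document; each statement's English description precedes it below -/
import Mathlib

section
/- Let H be a real Hilbert space, D a nonempty closed convex subset, and T_1,...,T_m nonexpansive operators from D to D. If for some j the operator T_j has bounded range, then for every ε ∈ (0,1], the under-relaxed composition R^ε = (Id + ε(T_m − Id)) ∘ ... ∘ (Id + ε(T_1 − Id)) has a fixed point, and the fixed points of R^ε are uniformly bounded in norm independently of ε. -/
/-!
Fix `p ∈ D`. A relaxed step `Id + ε (T i - Id)` moves a point at most `ε ‖T i p - p‖` further
from `p`, and the step through `T j`, whose values stay within `K` of `p`, contracts the distance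
by the factor `1 - ε`. Hence `‖R^ε u - p‖ ≤ (1 - ε) ‖u - p‖ + ε A` with `A` independent of `ε`,
so `R^ε` maps `D ∩ closedBall p A` into itself and all its fixed points lie in that ball.

Existence is Browder's theorem for nonexpansive self-maps of a bounded closed convex set `C`:
along an ultrafilter, approximate fixed points `x n` satisfy `‖y - x n‖ ^ 2 → ‖y - w‖ ^ 2 + c`
for a weak ultralimit `w`, and the nearest point of `C` to `w` is fixed.
-/

open Filter Topology Metric

/-- `relaxComp m T ε = (Id + ε(T m − Id)) ∘ ⋯ ∘ (Id + ε(T 1 − Id))`: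
the under-relaxed cyclic composition, applying `T 1` first and `T m` last. -/
noncomputable def relaxComp {H : Type*} [NormedAddCommGroup H] [Module ℝ H]
    (m : ℕ) (T : ℕ → H → H) (ε : ℝ) (x : H) : H :=
  (List.range m).foldl (fun y i => y + ε • (T (i + 1) y - y)) x

open Set Function
open scoped InnerProductSpace

theorem Ultrafilter.exists_tendsto_of_isBounded_range {α β : Type*} [PseudoMetricSpace β]
    [ProperSpace β] (U : Ultrafilter α) {a : α → β} (ha : Bornology.IsBounded (range a)) :
    ∃ l, Tendsto a U (𝓝 l) := by
  have hU : (U.map a : Filter β) ≤ 𝓟 (closure (range a)) := by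
    rw [Ultrafilter.coe_map, le_principal_iff]
    exact mem_map.2 (univ_mem' fun n => subset_closure (mem_range_self n))
  obtain ⟨l, -, hl⟩ := ha.isCompact_closure.ultrafilter_le_nhds _ hU
  exact ⟨l, hl⟩

section ApproximateFixedPoints

variable {E : Type*} [NormedAddCommGroup E] [NormedSpace ℝ E] {C : Set E} {f : E → E}

/-- The fixed point of the contraction `y ↦ p + t (f y - p)` is a `(1 - t) diam C`-approximate
fixed point of `f`. -/
theorem exists_dist_self_le_mul_diam (hCc : IsComplete C) (hCconv : Convex ℝ C)
    (hCb : Bornology.IsBounded C) {p : E} (hp : p ∈ C) (hf : MapsTo f C C)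
    (hL : LipschitzOnWith 1 f C) {t : ℝ} (ht0 : 0 ≤ t) (ht1 : t < 1) :
    ∃ y ∈ C, dist y (f y) ≤ (1 - t) * diam C := by
  set g : E → E := fun y => p + t • (f y - p)
  have hg : MapsTo g C C := fun y hy => hCconv.add_smul_sub_mem hp (hf hy) ⟨ht0, ht1.le⟩
  have hgL : ContractingWith ⟨t, ht0⟩ (hg.restrict g C C) := by
    refine ⟨ht1, LipschitzOnWith.mapsToRestrict hg ?_⟩
    refine lipschitzOnWith_iff_norm_sub_le.2 fun x hx y hy => ?_
    have hxy : g x - g y = t • (f x - f y) := by simp only [g]; module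
    rw [hxy, norm_smul, Real.norm_of_nonneg ht0]
    change t * ‖f x - f y‖ ≤ t * ‖x - y‖
    exact mul_le_mul_of_nonneg_left (by simpa using hL.norm_sub_le hx hy) ht0
  obtain ⟨y, hy, hfix, -⟩ := hgL.exists_fixedPoint' hCc hg hp (edist_ne_top _ _)
  refine ⟨y, hy, ?_⟩
  have hy' : y - f y = (1 - t) • (p - f y) := by
    nth_rewrite 1 [← hfix.eq]
    simp only [g]; module
  rw [dist_eq_norm, hy', norm_smul, Real.norm_of_nonneg (by linarith), ← dist_eq_norm]
  exact mul_le_mul_of_nonneg_left (dist_le_diam_of_mem hCb hp (hf hy)) (by linarith)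

theorem exists_seq_tendsto_dist_self_zero (hCc : IsComplete C) (hCconv : Convex ℝ C)
    (hCb : Bornology.IsBounded C) (hne : C.Nonempty) (hf : MapsTo f C C)
    (hL : LipschitzOnWith 1 f C) :
    ∃ x : ℕ → E, (∀ n, x n ∈ C) ∧ Tendsto (fun n => dist (x n) (f (x n))) atTop (𝓝 0) := by
  obtain ⟨p, hp⟩ := hne
  have hx (n : ℕ) : ∃ y ∈ C, dist y (f y) ≤ 1 / ((n : ℝ) + 1) * diam C := by
    have hpos : 0 < 1 / ((n : ℝ) + 1) := Nat.one_div_pos_of_nat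
    have hle : 1 / ((n : ℝ) + 1) ≤ 1 := by
      rw [div_le_one (by positivity)]; linarith [n.cast_nonneg (α := ℝ)]
    simpa only [sub_sub_cancel] using exists_dist_self_le_mul_diam hCc hCconv hCb hp hf hL
      (t := 1 - 1 / ((n : ℝ) + 1)) (by linarith) (by linarith)
  choose x hxC hxf using hx
  refine ⟨x, hxC, squeeze_zero (fun n => dist_nonneg) hxf ?_⟩
  simpa using tendsto_one_div_add_atTop_nhds_zero_nat.mul_const (diam C)

end ApproximateFixedPoints

section Hilbert

variable {H : Type*} [NormedAddCommGroup H] [InnerProductSpace ℝ H]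

theorem exists_tendsto_inner_ultrafilter [CompleteSpace H] {α : Type*} (U : Ultrafilter α)
    {x : α → H} (hx : Bornology.IsBounded (range x)) :
    ∃ w : H, ∀ y, Tendsto (fun n => ⟪x n, y⟫_ℝ) U (𝓝 ⟪w, y⟫_ℝ) := by
  obtain ⟨M, hM⟩ := isBounded_iff_forall_norm_le.1 hx
  have hbd (y : H) (n : α) : |⟪x n, y⟫_ℝ| ≤ M * ‖y‖ :=
    (abs_real_inner_le_norm _ _).trans
      (mul_le_mul_of_nonneg_right (hM _ (mem_range_self n)) (norm_nonneg y))
  have hlim (y : H) : ∃ l, Tendsto (fun n => ⟪x n, y⟫_ℝ) U (𝓝 l) :=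
    U.exists_tendsto_of_isBounded_range
      (isBounded_iff_forall_norm_le.2 ⟨M * ‖y‖, forall_mem_range.2 (hbd y)⟩)
  choose ℓ hℓ using hlim
  let L : H →ₗ[ℝ] ℝ :=
    { toFun := ℓ
      map_add' := fun y z => tendsto_nhds_unique (hℓ (y + z))
        (by simpa only [inner_add_right] using (hℓ y).add (hℓ z))
      map_smul' := fun c y => tendsto_nhds_unique (hℓ (c • y))
        (by simpa only [real_inner_smul_right, RingHom.id_apply, smul_eq_mul]
          using (hℓ y).const_mul c) }
  let Lc : StrongDual ℝ H := L.mkContinuous M fun y => le_of_tendsto' (hℓ y).abs (hbd y)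
  refine ⟨(InnerProductSpace.toDual ℝ H).symm Lc, fun y => ?_⟩
  rw [InnerProductSpace.toDual_symm_apply]
  exact hℓ y

theorem exists_tendsto_norm_sub_sq_ultrafilter [CompleteSpace H] {α : Type*}
    (U : Ultrafilter α) {x : α → H} (hx : Bornology.IsBounded (range x)) :
    ∃ w : H, ∃ c : ℝ, ∀ y, Tendsto (fun n => ‖y - x n‖ ^ 2) U (𝓝 (‖y - w‖ ^ 2 + c)) := by
  obtain ⟨w, hw⟩ := exists_tendsto_inner_ultrafilter U hx
  obtain ⟨M, hM⟩ := isBounded_iff_forall_norm_le.1 hx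
  obtain ⟨c, hc⟩ := U.exists_tendsto_of_isBounded_range (a := fun n => ‖x n‖ ^ 2)
    (isBounded_iff_forall_norm_le.2 ⟨M ^ 2, forall_mem_range.2 fun n => by
      rw [Real.norm_of_nonneg (by positivity)]
      exact pow_le_pow_left₀ (norm_nonneg _) (hM _ (mem_range_self n)) 2⟩)
  refine ⟨w, c - ‖w‖ ^ 2, fun y => ?_⟩
  convert (tendsto_const_nhds (x := ‖y‖ ^ 2)).sub ((hw y).const_mul 2) |>.add hc using 1
  · funext n
    rw [norm_sub_sq_real, real_inner_comm]
  · rw [norm_sub_sq_real, real_inner_comm]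
    congr 1
    ring

theorem eq_of_norm_sub_le_of_norm_eq_iInf {K : Set H} (hK : Convex ℝ K) {u v w : H}
    (hv : v ∈ K) (hmin : ‖u - v‖ = ⨅ z : K, ‖u - z‖) (hw : w ∈ K) (hle : ‖u - w‖ ≤ ‖u - v‖) :
    w = v := by
  have hinner := (norm_eq_iInf_iff_real_inner_le_zero hK hv).1 hmin w hw
  have hexpand : ‖u - w‖ ^ 2 = ‖u - v‖ ^ 2 - 2 * ⟪u - v, w - v⟫_ℝ + ‖w - v‖ ^ 2 := by
    rw [← norm_sub_sq_real, sub_sub_sub_cancel_right]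
  have hsq : ‖w - v‖ ^ 2 ≤ 0 := by nlinarith [norm_nonneg (u - w)]
  exact sub_eq_zero.1 (norm_eq_zero.1 (pow_eq_zero_iff two_ne_zero |>.1
    (le_antisymm hsq (sq_nonneg _))))

theorem exists_isFixedPt_of_lipschitzOnWith_one [CompleteSpace H] {C : Set H} {f : H → H}
    (hCc : IsClosed C) (hCconv : Convex ℝ C) (hCb : Bornology.IsBounded C) (hne : C.Nonempty)
    (hf : MapsTo f C C) (hL : LipschitzOnWith 1 f C) : ∃ z ∈ C, IsFixedPt f z := by
  obtain ⟨x, hxC, hδ⟩ := exists_seq_tendsto_dist_self_zero hCc.isComplete hCconv hCb hne hf hL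
  obtain ⟨U, hU⟩ := (atTop : Filter ℕ).exists_ultrafilter_le
  obtain ⟨w, c, hlim⟩ :=
    exists_tendsto_norm_sub_sq_ultrafilter U (hCb.subset (range_subset_iff.2 hxC))
  obtain ⟨z, hz, hzmin⟩ := exists_norm_eq_iInf_of_complete_convex hne hCc.isComplete hCconv w
  have hdist (n : ℕ) :
      ‖f z - x n‖ ^ 2 ≤ ‖z - x n‖ ^ 2 + 3 * diam C * dist (x n) (f (x n)) := by
    have h1 : ‖f z - x n‖ ≤ ‖z - x n‖ + dist (x n) (f (x n)) := by
      rw [dist_comm, dist_eq_norm]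
      exact (norm_sub_le_norm_sub_add_norm_sub _ (f (x n)) _).trans
        (by simpa using hL.norm_sub_le hz (hxC n))
    have h2 : ‖z - x n‖ ≤ diam C := by
      rw [← dist_eq_norm]; exact dist_le_diam_of_mem hCb hz (hxC n)
    have h3 : dist (x n) (f (x n)) ≤ diam C := dist_le_diam_of_mem hCb (hxC n) (hf (hxC n))
    -- `(a + d) ^ 2 = a ^ 2 + d (2 a + d)` with `a, d ≤ diam C`
    nlinarith [norm_nonneg (z - x n), norm_nonneg (f z - x n),
      dist_nonneg (x := x n) (y := f (x n))]
  have hle : ‖f z - w‖ ^ 2 + c ≤ ‖z - w‖ ^ 2 + c :=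
    le_of_tendsto_of_tendsto' (hlim (f z))
      (by simpa using (hlim z).add ((hδ.mono_left hU).const_mul (3 * diam C))) hdist
  refine ⟨z, hz, eq_of_norm_sub_le_of_norm_eq_iInf hCconv hz hzmin (hf hz) ?_⟩
  rw [norm_sub_rev w, norm_sub_rev w]
  exact (pow_le_pow_iff_left₀ (norm_nonneg _) (norm_nonneg _) two_ne_zero).1 (by linarith)

end Hilbert

section Relaxation

def relax {E : Type*} [AddCommGroup E] [Module ℝ E] (ε : ℝ) (U : E → E) (x : E) : E :=
  x + ε • (U x - x)

variable {E : Type*} [NormedAddCommGroup E] [NormedSpace ℝ E] {ε : ℝ} {U : E → E} {D : Set E}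

theorem norm_add_smul_sub_le (hε0 : 0 ≤ ε) (hε1 : ε ≤ 1) (a b : E) :
    ‖a + ε • (b - a)‖ ≤ (1 - ε) * ‖a‖ + ε * ‖b‖ := by
  have hab : a + ε • (b - a) = (1 - ε) • a + ε • b := by module
  rw [hab]
  refine (norm_add_le _ _).trans_eq ?_
  rw [norm_smul, norm_smul, Real.norm_of_nonneg (by linarith), Real.norm_of_nonneg hε0]

theorem norm_relax_sub_le (hε0 : 0 ≤ ε) (hε1 : ε ≤ 1) (x p : E) :
    ‖relax ε U x - p‖ ≤ (1 - ε) * ‖x - p‖ + ε * ‖U x - p‖ := by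
  convert norm_add_smul_sub_le hε0 hε1 (x - p) (U x - p) using 2
  simp only [relax]
  module

theorem norm_relax_sub_le_add (hε0 : 0 ≤ ε) (hε1 : ε ≤ 1) (hU : LipschitzOnWith 1 U D)
    {x p : E} (hx : x ∈ D) (hp : p ∈ D) : ‖relax ε U x - p‖ ≤ ‖x - p‖ + ε * ‖U p - p‖ := by
  have hUx : ‖U x - p‖ ≤ ‖x - p‖ + ‖U p - p‖ :=
    (norm_sub_le_norm_sub_add_norm_sub _ (U p) _).trans
      (add_le_add_left (by simpa using hU.norm_sub_le hx hp) _)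
  nlinarith [norm_relax_sub_le (U := U) hε0 hε1 x p]

theorem Convex.mapsTo_relax (hD : Convex ℝ D) (hU : MapsTo U D D) (hε0 : 0 ≤ ε) (hε1 : ε ≤ 1) :
    MapsTo (relax ε U) D D :=
  fun _ hx => hD.add_smul_sub_mem hx (hU hx) ⟨hε0, hε1⟩

theorem LipschitzOnWith.relax (hU : LipschitzOnWith 1 U D) (hε0 : 0 ≤ ε) (hε1 : ε ≤ 1) :
    LipschitzOnWith 1 (_root_.relax ε U) D := by
  refine lipschitzOnWith_iff_norm_sub_le.2 fun x hx y hy => ?_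
  have hxy : _root_.relax ε U x - _root_.relax ε U y = (x - y) + ε • ((U x - U y) - (x - y)) := by
    simp only [_root_.relax]; module
  rw [hxy, NNReal.coe_one, one_mul]
  have hUxy : ‖U x - U y‖ ≤ ‖x - y‖ := by simpa using hU.norm_sub_le hx hy
  nlinarith [norm_add_smul_sub_le hε0 hε1 (x - y) (U x - U y)]

end Relaxation

section RelaxComp

variable {H : Type*} [NormedAddCommGroup H] [NormedSpace ℝ H] {m j : ℕ} {T : ℕ → H → H}
  {D : Set H} {ε : ℝ}

theorem relaxComp_zero (T : ℕ → H → H) (ε : ℝ) : relaxComp 0 T ε = id := rfl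

theorem relaxComp_succ (m : ℕ) (T : ℕ → H → H) (ε : ℝ) :
    relaxComp (m + 1) T ε = relax ε (T (m + 1)) ∘ relaxComp m T ε := by
  funext x
  simp [relaxComp, relax, List.range_succ]

theorem mapsTo_relaxComp (hD : Convex ℝ D) (hT : ∀ i ∈ Finset.Icc 1 m, MapsTo (T i) D D)
    (hε0 : 0 ≤ ε) (hε1 : ε ≤ 1) : MapsTo (relaxComp m T ε) D D := by
  induction m with
  | zero => exact mapsTo_id D
  | succ k ih =>
    rw [relaxComp_succ]
    exact (hD.mapsTo_relax (hT _ (by simp)) hε0 hε1).comp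
      (ih fun i hi => hT i (Finset.Icc_subset_Icc_right k.le_succ hi))

theorem lipschitzOnWith_relaxComp (hD : Convex ℝ D) (hT : ∀ i ∈ Finset.Icc 1 m, MapsTo (T i) D D)
    (hL : ∀ i ∈ Finset.Icc 1 m, LipschitzOnWith 1 (T i) D) (hε0 : 0 ≤ ε) (hε1 : ε ≤ 1) :
    LipschitzOnWith 1 (relaxComp m T ε) D := by
  induction m with
  | zero => exact LipschitzWith.id.lipschitzOnWith
  | succ k ih =>
    have hsub := Finset.Icc_subset_Icc_right (a := 1) k.le_succ
    rw [relaxComp_succ, ← one_mul (1 : NNReal)]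
    exact ((hL _ (by simp)).relax hε0 hε1).comp (ih (fun i hi => hT i (hsub hi))
      (fun i hi => hL i (hsub hi))) (mapsTo_relaxComp hD (fun i hi => hT i (hsub hi)) hε0 hε1)

theorem norm_relaxComp_sub_le_add (hD : Convex ℝ D) (hT : ∀ i ∈ Finset.Icc 1 m, MapsTo (T i) D D)
    (hL : ∀ i ∈ Finset.Icc 1 m, LipschitzOnWith 1 (T i) D) (hε0 : 0 ≤ ε) (hε1 : ε ≤ 1)
    {p : H} (hp : p ∈ D) {u : H} (hu : u ∈ D) :
    ‖relaxComp m T ε u - p‖ ≤ ‖u - p‖ + ε * ∑ i ∈ Finset.Icc 1 m, ‖T i p - p‖ := by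
  induction m with
  | zero => simp [relaxComp_zero]
  | succ k ih =>
    have hsub := Finset.Icc_subset_Icc_right (a := 1) k.le_succ
    have hk := ih (fun i hi => hT i (hsub hi)) (fun i hi => hL i (hsub hi))
    have hstep := norm_relax_sub_le_add hε0 hε1 (hL (k + 1) (by simp))
      (mapsTo_relaxComp hD (fun i hi => hT i (hsub hi)) hε0 hε1 hu) hp
    rw [relaxComp_succ, comp_apply, Finset.sum_Icc_succ_top (by omega)]
    linarith

theorem norm_relaxComp_sub_le (hD : Convex ℝ D) (hT : ∀ i ∈ Finset.Icc 1 m, MapsTo (T i) D D)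
    (hL : ∀ i ∈ Finset.Icc 1 m, LipschitzOnWith 1 (T i) D) (hε0 : 0 ≤ ε) (hε1 : ε ≤ 1)
    (hj : j ∈ Finset.Icc 1 m) {p : H} (hp : p ∈ D) {K : ℝ} (hK : ∀ y ∈ D, ‖T j y - p‖ ≤ K)
    {u : H} (hu : u ∈ D) :
    ‖relaxComp m T ε u - p‖ ≤ (1 - ε) * ‖u - p‖ + ε * (K + ∑ i ∈ Finset.Icc 1 m, ‖T i p - p‖) := by
  obtain ⟨hj1, hjm⟩ := Finset.mem_Icc.1 hj
  induction m, hjm using Nat.le_induction with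
  | base =>
    obtain ⟨k, rfl⟩ := Nat.exists_eq_add_of_le' hj1
    have hsub := Finset.Icc_subset_Icc_right (a := 1) k.le_succ
    have hk := norm_relaxComp_sub_le_add hD (fun i hi => hT i (hsub hi))
      (fun i hi => hL i (hsub hi)) hε0 hε1 hp hu
    have hstep := norm_relax_sub_le (U := T (k + 1)) hε0 hε1 (relaxComp k T ε u) p
    have hTj := hK _ (mapsTo_relaxComp hD (fun i hi => hT i (hsub hi)) hε0 hε1 hu)
    have hS : 0 ≤ ∑ i ∈ Finset.Icc 1 k, ‖T i p - p‖ := Finset.sum_nonneg fun _ _ => norm_nonneg _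
    rw [relaxComp_succ, comp_apply, Finset.sum_Icc_succ_top (by omega)]
    nlinarith [norm_nonneg (T (k + 1) p - p), mul_nonneg hε0 hε0,
      mul_le_mul_of_nonneg_left hk (by linarith : 0 ≤ 1 - ε),
      mul_le_mul_of_nonneg_left hTj hε0]
  | succ k hjk ih =>
    have hsub := Finset.Icc_subset_Icc_right (a := 1) k.le_succ
    have hk := ih (fun i hi => hT i (hsub hi)) (fun i hi => hL i (hsub hi))
      (Finset.mem_Icc.2 ⟨hj1, hjk⟩)
    have hstep := norm_relax_sub_le_add hε0 hε1 (hL (k + 1) (by simp))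
      (mapsTo_relaxComp hD (fun i hi => hT i (hsub hi)) hε0 hε1 hu) hp
    rw [relaxComp_succ, comp_apply, Finset.sum_Icc_succ_top (by omega)]
    linarith

end RelaxComp

theorem exists_isFixedPt_of_norm_sub_le {H : Type*} [NormedAddCommGroup H]
    [InnerProductSpace ℝ H] [CompleteSpace H] {f : H → H} {D : Set H} {p : H} {ε A : ℝ}
    (hDc : IsClosed D) (hDconv : Convex ℝ D) (hf : MapsTo f D D) (hL : LipschitzOnWith 1 f D) (hp : p ∈ D)
    (hε1 : ε ≤ 1) (hA : 0 ≤ A) (hfp : ∀ u ∈ D, ‖f u - p‖ ≤ (1 - ε) * ‖u - p‖ + ε * A) :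
    ∃ z ∈ D, IsFixedPt f z := by
  have hmaps : MapsTo f (D ∩ closedBall p A) (D ∩ closedBall p A) := by
    rintro u ⟨hu, hup⟩
    rw [mem_closedBall, dist_eq_norm] at hup
    refine ⟨hf hu, ?_⟩
    rw [mem_closedBall, dist_eq_norm]
    nlinarith [hfp u hu]
  obtain ⟨z, hz, hfix⟩ := exists_isFixedPt_of_lipschitzOnWith_one
    (hDc.inter isClosed_closedBall) (hDconv.inter (convex_closedBall p A))
    (isBounded_closedBall.subset inter_subset_right) ⟨p, hp, mem_closedBall_self hA⟩ hmaps
    (hL.mono inter_subset_left)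
  exact ⟨z, hz.1, hfix⟩

theorem stmt0_general {H : Type*} [NormedAddCommGroup H] [InnerProductSpace ℝ H] [CompleteSpace H]
    (D : Set H) (hD : D.Nonempty) (hDc : IsClosed D) (hDconv : Convex ℝ D)
    (m : ℕ) (T : ℕ → H → H)
    (hmap : ∀ i ∈ Finset.Icc 1 m, Set.MapsTo (T i) D D)
    (hne : ∀ i ∈ Finset.Icc 1 m, ∀ x ∈ D, ∀ y ∈ D, ‖T i x - T i y‖ ≤ ‖x - y‖)
    (j : ℕ) (hj : j ∈ Finset.Icc 1 m)
    (hbdd : ∃ y ρ, T j '' D ⊆ Metric.closedBall y ρ) :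
    ∃ β : ℝ, ∀ ε ∈ Set.Ioc (0:ℝ) 1,
      (∃ z ∈ D, relaxComp m T ε z = z) ∧
      (∀ z ∈ D, relaxComp m T ε z = z → ‖z‖ ≤ β) := by
  obtain ⟨p, hp⟩ := hD
  obtain ⟨c, ρ, hc⟩ := hbdd
  have hL : ∀ i ∈ Finset.Icc 1 m, LipschitzOnWith 1 (T i) D := fun i hi =>
    lipschitzOnWith_iff_norm_sub_le.2 fun x hx y hy => by simpa using hne i hi x hx y hy
  have hTj : ∀ y ∈ D, ‖T j y - p‖ ≤ ρ + dist c p := fun y hy => by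
    rw [← dist_eq_norm]
    exact (dist_triangle _ c p).trans (add_le_add_left (hc ⟨y, hy, rfl⟩) _)
  set A := ρ + dist c p + ∑ i ∈ Finset.Icc 1 m, ‖T i p - p‖
  have hA : 0 ≤ A := add_nonneg (add_nonneg (dist_nonneg.trans (hc ⟨p, hp, rfl⟩)) dist_nonneg)
    (Finset.sum_nonneg fun _ _ => norm_nonneg _)
  refine ⟨‖p‖ + A, fun ε ⟨hε0, hε1⟩ => ?_⟩
  have hR (u : H) (hu : u ∈ D) : ‖relaxComp m T ε u - p‖ ≤ (1 - ε) * ‖u - p‖ + ε * A :=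
    norm_relaxComp_sub_le hDconv hmap hL hε0.le hε1 hj hp hTj hu
  refine ⟨exists_isFixedPt_of_norm_sub_le hDc hDconv (mapsTo_relaxComp hDconv hmap hε0.le hε1)
    (lipschitzOnWith_relaxComp hDconv hmap hL hε0.le hε1) hp hε1 hA hR, fun z hz hfix => ?_⟩
  have hzp : ‖z - p‖ ≤ A := by
    have := hR z hz
    rw [hfix] at this
    nlinarith
  linarith [norm_le_norm_add_norm_sub' z p]

theorem stmt0 {H : Type*} [NormedAddCommGroup H] [InnerProductSpace ℝ H] [CompleteSpace H]
    (D : Set H) (hD : D.Nonempty) (hDc : IsClosed D) (hDconv : Convex ℝ D)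
    (m : ℕ) (hm : 2 ≤ m) (T : ℕ → H → H)
    (hmap : ∀ i ∈ Finset.Icc 1 m, Set.MapsTo (T i) D D)
    (hne : ∀ i ∈ Finset.Icc 1 m, ∀ x ∈ D, ∀ y ∈ D, ‖T i x - T i y‖ ≤ ‖x - y‖)
    (j : ℕ) (hj : j ∈ Finset.Icc 1 m)
    (hbdd : ∃ y ρ, T j '' D ⊆ Metric.closedBall y ρ) :
    ∃ β : ℝ, ∀ ε ∈ Set.Ioc (0:ℝ) 1,
      (∃ z ∈ D, relaxComp m T ε z = z) ∧
      (∀ z ∈ D, relaxComp m T ε z = z → ‖z‖ ≤ β) :=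
  stmt0_general D hD hDc hDconv m T hmap hne j hj hbdd
end

section
/- With the notation above, fix y ∈ D and ρ ≥ max over i ≠ j of ‖T_i y − y‖ with T_j(D) ⊆ B(y;ρ). Then for every ε ∈ (0,1] and every x ∈ D, ‖R^ε x − y‖ ≤ (1−ε)‖x − y‖ + ε m ρ. In particular R^ε maps D ∩ B(y; mρ) into itself. -/
open Filter Topology Metric

theorem stmt1 {H : Type*} [NormedAddCommGroup H] [InnerProductSpace ℝ H] [CompleteSpace H]
    (D : Set H) (hD : D.Nonempty) (hDc : IsClosed D) (hDconv : Convex ℝ D)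
    (m : ℕ) (hm : 2 ≤ m) (T : ℕ → H → H)
    (hmap : ∀ i ∈ Finset.Icc 1 m, Set.MapsTo (T i) D D)
    (hne : ∀ i ∈ Finset.Icc 1 m, ∀ x ∈ D, ∀ y ∈ D, ‖T i x - T i y‖ ≤ ‖x - y‖)
    (j : ℕ) (hj : j ∈ Finset.Icc 1 m)
    (y : H) (hy : y ∈ D) (ρ : ℝ)
    (hρ : ∀ i ∈ Finset.Icc 1 m, i ≠ j → ‖T i y - y‖ ≤ ρ)
    (hrange : T j '' D ⊆ Metric.closedBall y ρ) :
    ∀ ε ∈ Set.Ioc (0:ℝ) 1,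
      (∀ x ∈ D, ‖relaxComp m T ε x - y‖ ≤ (1 - ε) * ‖x - y‖ + ε * m * ρ) ∧
      Set.MapsTo (relaxComp m T ε) (D ∩ Metric.closedBall y (m * ρ))
        (D ∩ Metric.closedBall y (m * ρ)) := by
  intro ε hε
  obtain ⟨hε0, hε1⟩ := hε
  obtain ⟨hj1, hjm⟩ := Finset.mem_Icc.mp hj
  have hρ0 : 0 ≤ ρ := by
    have h1 : T j y ∈ Metric.closedBall y ρ := hrange ⟨y, hy, rfl⟩
    have h2 := mem_closedBall_iff_norm.mp h1
    linarith [norm_nonneg (T j y - y)]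
  have key : ∀ x ∈ D, ∀ k, k ≤ m →
      ((List.range k).foldl (fun z i => z + ε • (T (i+1) z - z)) x ∈ D) ∧
      ‖(List.range k).foldl (fun z i => z + ε • (T (i+1) z - z)) x - y‖ ≤
        (if j ≤ k then (1-ε) else 1) * ‖x - y‖ + ε * k * ρ := by
    intro x hx k
    induction k with
    | zero =>
      intro _
      simp only [List.range_zero, List.foldl_nil, Nat.cast_zero]
      rw [if_neg (by omega)]
      exact ⟨hx, by simp⟩
    | succ k ih =>
      intro hk
      obtain ⟨hmem, hbound⟩ := ih (by omega)
      set z := (List.range k).foldl (fun z i => z + ε • (T (i+1) z - z)) x with hz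
      have hik : k + 1 ∈ Finset.Icc 1 m := Finset.mem_Icc.mpr ⟨by omega, hk⟩
      have hTmem : T (k+1) z ∈ D := hmap (k+1) hik hmem
      rw [List.range_succ, List.foldl_append, List.foldl_cons, List.foldl_nil, ← hz]
      set w := z + ε • (T (k+1) z - z) with hwdef
      have hweq : w = (1-ε) • z + ε • T (k+1) z := by rw [hwdef]; module
      have hwD : w ∈ D := by
        rw [hweq]
        exact hDconv hmem hTmem (by linarith) hε0.le (by ring)
      have hw : w - y = (1-ε) • (z - y) + ε • (T (k+1) z - y) := by
        rw [hwdef]; module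
      have h1 : ‖w - y‖ ≤ (1-ε) * ‖z - y‖ + ε * ‖T (k+1) z - y‖ := by
        rw [hw]
        refine (norm_add_le _ _).trans ?_
        rw [norm_smul, norm_smul, Real.norm_eq_abs, Real.norm_eq_abs,
          abs_of_nonneg (by linarith), abs_of_nonneg hε0.le]
      refine ⟨hwD, ?_⟩
      by_cases hcase : k + 1 = j
      · -- step j: use the bounded range of T j
        have hTz : ‖T (k+1) z - y‖ ≤ ρ := by
          rw [hcase]
          exact mem_closedBall_iff_norm.mp (hrange ⟨z, hmem, rfl⟩)
        rw [if_neg (by omega)] at hbound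
        rw [if_pos (by omega)]
        push_cast
        have hnn : 0 ≤ ‖x - y‖ := norm_nonneg _
        have hkc : (0:ℝ) ≤ (k:ℝ) := Nat.cast_nonneg k
        nlinarith [mul_nonneg (mul_nonneg hε0.le hkc) hρ0,
          mul_nonneg hε0.le (mul_nonneg (mul_nonneg hε0.le hkc) hρ0)]
      · -- other steps: nonexpansiveness plus the bound on ‖T i y - y‖
        have hTz : ‖T (k+1) z - y‖ ≤ ‖z - y‖ + ρ := by
          calc ‖T (k+1) z - y‖ ≤ ‖T (k+1) z - T (k+1) y‖ + ‖T (k+1) y - y‖ :=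
                norm_sub_le_norm_sub_add_norm_sub _ _ _
            _ ≤ ‖z - y‖ + ρ :=
                add_le_add (hne (k+1) hik z hmem y hy) (hρ (k+1) hik hcase)
        have h2 : ‖w - y‖ ≤ ‖z - y‖ + ε * ρ := by nlinarith [norm_nonneg (z - y)]
        by_cases hjk : j ≤ k
        · rw [if_pos hjk] at hbound
          rw [if_pos (by omega)]
          push_cast
          linarith
        · rw [if_neg hjk] at hbound
          rw [if_neg (by omega)]
          push_cast
          linarith
  have hbnd : ∀ x ∈ D, ‖relaxComp m T ε x - y‖ ≤ (1 - ε) * ‖x - y‖ + ε * m * ρ := by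
    intro x hx
    have := (key x hx m le_rfl).2
    rwa [if_pos hjm] at this
  refine ⟨hbnd, ?_⟩
  rintro x ⟨hxD, hxball⟩
  refine ⟨(key x hxD m le_rfl).1, ?_⟩
  rw [mem_closedBall_iff_norm] at hxball ⊢
  have h1 := hbnd x hxD
  have h2 : (1 - ε) * ‖x - y‖ ≤ (1 - ε) * ((m:ℝ) * ρ) :=
    mul_le_mul_of_nonneg_left hxball (by linarith)
  nlinarith
end

section
/- Suppose T_1,...,T_m : D → D are nonexpansive with a common fixed point, and each T_i is strictly nonexpansive in the sense that ‖T_i x − y‖ < ‖x − y‖ whenever x ∈ D is not a fixed point of T_i and y is a fixed point of T_i. Then Fix(T_m ∘ ... ∘ T_1) = ⋂_i Fix(T_i) = Fix((1/m)∑ T_i). -/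
open Filter Topology

private def seqT {H : Type*} (T : ℕ → H → H) (x : H) (k : ℕ) : H :=
  (List.range k).foldl (fun z i => T (i + 1) z) x

private lemma seqT_succ {H : Type*} (T : ℕ → H → H) (x : H) (k : ℕ) :
    seqT T x (k + 1) = T (k + 1) (seqT T x k) := by
  simp [seqT, List.range_succ]

theorem stmt5 {H : Type*} [NormedAddCommGroup H] [InnerProductSpace ℝ H] [CompleteSpace H]
    (D : Set H) (hD : D.Nonempty) (hDc : IsClosed D) (hDconv : Convex ℝ D)
    (m : ℕ) (hm : 2 ≤ m) (T : ℕ → H → H)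
    (hmap : ∀ i ∈ Finset.Icc 1 m, Set.MapsTo (T i) D D)
    (hne : ∀ i ∈ Finset.Icc 1 m, ∀ x ∈ D, ∀ y ∈ D, ‖T i x - T i y‖ ≤ ‖x - y‖)
    (hcommon : ∃ x ∈ D, ∀ i ∈ Finset.Icc 1 m, T i x = x)
    (hstrict : ∀ i ∈ Finset.Icc 1 m, ∀ x ∈ D, T i x ≠ x →
      ∀ y ∈ D, T i y = y → ‖T i x - y‖ < ‖x - y‖) :
    {x ∈ D | (List.range m).foldl (fun y i => T (i + 1) y) x = x}
      = {x ∈ D | ∀ i ∈ Finset.Icc 1 m, T i x = x} ∧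
    {x ∈ D | ∀ i ∈ Finset.Icc 1 m, T i x = x}
      = {x ∈ D | (m:ℝ)⁻¹ • (∑ i ∈ Finset.Icc 1 m, T i x) = x} := by
  obtain ⟨y, hyD, hyfix⟩ := hcommon
  have hmR : (0:ℝ) < (m:ℝ) := by exact_mod_cast Nat.lt_of_lt_of_le Nat.zero_lt_two hm
  have hcard : (Finset.Icc 1 m).card = m := by rw [Nat.card_Icc]; omega
  -- membership in D along the chain
  have seqD : ∀ x ∈ D, ∀ k, k ≤ m → seqT T x k ∈ D := by
    intro x hx k
    induction k with
    | zero => intro _; simpa [seqT] using hx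
    | succ n ih =>
      intro hk
      rw [seqT_succ]
      exact hmap (n + 1) (Finset.mem_Icc.mpr ⟨Nat.le_add_left 1 n, hk⟩)
        (ih (Nat.le_of_succ_le hk))
  -- distances to y decrease along the chain
  have seq_step : ∀ x ∈ D, ∀ k, k + 1 ≤ m →
      ‖seqT T x (k + 1) - y‖ ≤ ‖seqT T x k - y‖ := by
    intro x hx k hk
    have hmem : k + 1 ∈ Finset.Icc 1 m := Finset.mem_Icc.mpr ⟨Nat.le_add_left 1 k, hk⟩
    have := hne (k + 1) hmem (seqT T x k) (seqD x hx k (Nat.le_of_succ_le hk)) y hyD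
    rw [hyfix (k + 1) hmem] at this
    rw [seqT_succ]; exact this
  have seq_anti : ∀ x ∈ D, ∀ j k, j ≤ k → k ≤ m →
      ‖seqT T x k - y‖ ≤ ‖seqT T x j - y‖ := by
    intro x hx j k hjk hkm
    induction k with
    | zero => simp_all
    | succ n ih =>
      rcases Nat.eq_or_lt_of_le hjk with h | h
      · rw [h]
      · exact le_trans (seq_step x hx n hkm)
          (ih (Nat.lt_succ_iff.mp h) (Nat.le_of_succ_le hkm))
  refine ⟨?_, ?_⟩
  · ext x
    simp only [Set.mem_setOf_eq]
    constructor
    · rintro ⟨hxD, hfix⟩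
      have hfix' : seqT T x m = x := hfix
      -- seq x k = x for all k ≤ m
      have key : ∀ k, k ≤ m → seqT T x k = x := by
        intro k
        induction k with
        | zero => intro _; rfl
        | succ n ih =>
          intro hk
          have hxn : seqT T x n = x := ih (Nat.le_of_succ_le hk)
          have hmem : n + 1 ∈ Finset.Icc 1 m := Finset.mem_Icc.mpr ⟨Nat.le_add_left 1 n, hk⟩
          have heq : ‖seqT T x (n + 1) - y‖ = ‖x - y‖ := by
            have h1 : ‖seqT T x m - y‖ ≤ ‖seqT T x (n + 1) - y‖ :=
              seq_anti x hxD (n + 1) m hk le_rfl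
            rw [hfix'] at h1
            have h2 : ‖seqT T x (n + 1) - y‖ ≤ ‖seqT T x n - y‖ := seq_step x hxD n hk
            rw [hxn] at h2
            linarith
          have hTx : T (n + 1) x = x := by
            by_contra hne'
            have := hstrict (n + 1) hmem x hxD hne' y hyD (hyfix (n + 1) hmem)
            rw [seqT_succ, hxn] at heq
            linarith
          rw [seqT_succ, hxn, hTx]
      refine ⟨hxD, fun i hi => ?_⟩
      obtain ⟨h1, h2⟩ := Finset.mem_Icc.mp hi
      obtain ⟨n, rfl⟩ := Nat.exists_eq_add_of_le h1
      have e1 := key n (by omega)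
      have e2 := key (n + 1) (by omega)
      rw [seqT_succ, e1] at e2
      simpa [Nat.add_comm] using e2
    · rintro ⟨hxD, hfix⟩
      refine ⟨hxD, ?_⟩
      show seqT T x m = x
      have : ∀ k, k ≤ m → seqT T x k = x := by
        intro k
        induction k with
        | zero => intro _; rfl
        | succ n ih =>
          intro hk
          rw [seqT_succ, ih (Nat.le_of_succ_le hk),
            hfix (n + 1) (Finset.mem_Icc.mpr ⟨Nat.le_add_left 1 n, hk⟩)]
      exact this m le_rfl
  · ext x
    simp only [Set.mem_setOf_eq]
    constructor
    · rintro ⟨hxD, hfix⟩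
      refine ⟨hxD, ?_⟩
      have : ∑ i ∈ Finset.Icc 1 m, T i x = (m:ℝ) • x := by
        rw [Finset.sum_congr rfl (fun i hi => hfix i hi), Finset.sum_const, hcard,
          ← Nat.cast_smul_eq_nsmul ℝ]
      rw [this, smul_smul, inv_mul_cancel₀ (ne_of_gt hmR), one_smul]
    · rintro ⟨hxD, hmean⟩
      refine ⟨hxD, ?_⟩
      -- each term ≤ ‖x - y‖
      have hterm : ∀ i ∈ Finset.Icc 1 m, ‖T i x - y‖ ≤ ‖x - y‖ := by
        intro i hi
        have := hne i hi x hxD y hyD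
        rwa [hyfix i hi] at this
      -- the average equality forces sum ≥ m ‖x - y‖
      have hxy : x - y = (m:ℝ)⁻¹ • ∑ i ∈ Finset.Icc 1 m, (T i x - y) := by
        rw [Finset.sum_sub_distrib, smul_sub, hmean, Finset.sum_const, hcard,
          ← Nat.cast_smul_eq_nsmul ℝ, smul_smul, inv_mul_cancel₀ (ne_of_gt hmR), one_smul]
      have hsum_ge : (m:ℝ) * ‖x - y‖ ≤ ∑ i ∈ Finset.Icc 1 m, ‖T i x - y‖ := by
        have h1 : ‖x - y‖ ≤ (m:ℝ)⁻¹ * ∑ i ∈ Finset.Icc 1 m, ‖T i x - y‖ := by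
          rw [hxy, norm_smul]
          simp only [norm_inv, Real.norm_natCast]
          gcongr
          exact norm_sum_le _ _
        calc (m:ℝ) * ‖x - y‖ ≤ (m:ℝ) * ((m:ℝ)⁻¹ * ∑ i ∈ Finset.Icc 1 m, ‖T i x - y‖) := by
              gcongr
          _ = ∑ i ∈ Finset.Icc 1 m, ‖T i x - y‖ := by
              rw [← mul_assoc, mul_inv_cancel₀ (ne_of_gt hmR), one_mul]
      intro i hi
      by_contra hne'
      have hlt := hstrict i hi x hxD hne' y hyD (hyfix i hi)
      have : ∑ j ∈ Finset.Icc 1 m, ‖T j x - y‖ < ∑ j ∈ Finset.Icc 1 m, ‖x - y‖ :=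
        Finset.sum_lt_sum (fun j hj => hterm j hj) ⟨i, hi, hlt⟩
      rw [Finset.sum_const, hcard, nsmul_eq_mul] at this
      linarith
end

section
/- Suppose the cycle (x_1^ε,...,x_m^ε) satisfies x_i^ε = x_{i−1}^ε + ε(T_i x_{i−1}^ε − x_{i−1}^ε) for i = 1,...,m (indices mod m, x_0^ε = x_m^ε). Then ∑_{i=1}^m T_i x_{i−1}^ε = ∑_{i=1}^m x_i^ε, and consequently T x_m^ε − x_m^ε = (1/m)∑_{i=1}^{m−1}(x_i^ε − x_m^ε) + (1/m)∑_{i=1}^{m−1}(T_{i+1} x_m^ε − T_{i+1} x_i^ε), which yields ‖T x_m^ε − x_m^ε‖ ≤ (2/m)∑_{i=1}^{m−1}‖x_m^ε − x_i^ε‖. -/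
open Filter Topology

private lemma sumIcc {E : Type*} [AddCommMonoid E] (f : ℕ → E) (n : ℕ) :
    ∑ i ∈ Finset.Icc 1 n, f i = ∑ i ∈ Finset.range n, f (i + 1) := by
  rw [← Finset.Ico_add_one_right_eq_Icc, Finset.sum_Ico_eq_sum_range]
  simp [add_comm]

private lemma shiftIcc {E : Type*} [AddCommMonoid E] (f : ℕ → E) (n : ℕ) :
    ∑ i ∈ Finset.Icc 1 (n + 1), f i = f 1 + ∑ i ∈ Finset.Icc 1 n, f (i + 1) := by
  rw [sumIcc, sumIcc, Finset.sum_range_succ' (fun i => f (i + 1)) n]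
  exact add_comm _ _

theorem stmt6 {H : Type*} [NormedAddCommGroup H] [InnerProductSpace ℝ H] [CompleteSpace H]
    (D : Set H) (hD : D.Nonempty) (hDc : IsClosed D) (hDconv : Convex ℝ D)
    (m : ℕ) (hm : 2 ≤ m) (T : ℕ → H → H)
    (hmap : ∀ i ∈ Finset.Icc 1 m, Set.MapsTo (T i) D D)
    (hne : ∀ i ∈ Finset.Icc 1 m, ∀ x ∈ D, ∀ y ∈ D, ‖T i x - T i y‖ ≤ ‖x - y‖)
    (ε : ℝ) (hε : ε ∈ Set.Ioo (0:ℝ) 1)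
    (x : ℕ → H) (hxD : ∀ i ≤ m, x i ∈ D) (hx0 : x 0 = x m)
    (hcyc : ∀ i ∈ Finset.Icc 1 m,
      x i = x (i - 1) + ε • (T i (x (i - 1)) - x (i - 1))) :
    (∑ i ∈ Finset.Icc 1 m, T i (x (i - 1)) = ∑ i ∈ Finset.Icc 1 m, x i) ∧
    ((m:ℝ)⁻¹ • (∑ i ∈ Finset.Icc 1 m, T i (x m)) - x m
      = (m:ℝ)⁻¹ • (∑ i ∈ Finset.Icc 1 (m - 1), (x i - x m))
        + (m:ℝ)⁻¹ • (∑ i ∈ Finset.Icc 1 (m - 1), (T (i + 1) (x m) - T (i + 1) (x i)))) ∧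
    ‖(m:ℝ)⁻¹ • (∑ i ∈ Finset.Icc 1 m, T i (x m)) - x m‖
      ≤ (2 / m) * ∑ i ∈ Finset.Icc 1 (m - 1), ‖x m - x i‖ := by
  have hm1 : 1 ≤ m := by omega
  have hmm : m - 1 + 1 = m := by omega
  have hm0 : (m:ℝ) ≠ 0 := by positivity
  -- Part 1
  have key1 : ∑ i ∈ Finset.Icc 1 m, T i (x (i - 1)) = ∑ i ∈ Finset.Icc 1 m, x i := by
    have h1 : ∑ i ∈ Finset.Icc 1 m, (x i - x (i - 1))
        = ε • ∑ i ∈ Finset.Icc 1 m, (T i (x (i - 1)) - x (i - 1)) := by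
      rw [Finset.smul_sum]
      refine Finset.sum_congr rfl fun i hi => ?_
      rw [hcyc i hi]; abel
    have h2 : ∑ i ∈ Finset.Icc 1 m, (x i - x (i - 1)) = 0 := by
      rw [sumIcc]
      simp only [Nat.add_sub_cancel]
      rw [Finset.sum_range_sub x m, hx0, sub_self]
    have h3 : ∑ i ∈ Finset.Icc 1 m, (T i (x (i - 1)) - x (i - 1)) = 0 := by
      have := h1.symm.trans h2
      exact (smul_eq_zero.mp this).resolve_left (ne_of_gt hε.1)
    rw [Finset.sum_sub_distrib, sub_eq_zero] at h3
    rw [h3]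
    rw [sumIcc (fun i => x (i - 1)), sumIcc x]
    simp only [Nat.add_sub_cancel]
    have := Finset.sum_range_sub x m
    rw [Finset.sum_sub_distrib, hx0, sub_self, sub_eq_zero] at this
    exact this.symm
  refine ⟨key1, ?_⟩
  set S := ∑ i ∈ Finset.Icc 1 m, T i (x m) with hS
  -- splitting lemmas
  have split : ∑ i ∈ Finset.Icc 1 m, x i = ∑ i ∈ Finset.Icc 1 (m - 1), x i + x m := by
    conv_lhs => rw [← hmm]
    rw [Finset.sum_Icc_succ_top (by omega), hmm]
  have splitS : S = T 1 (x m) + ∑ i ∈ Finset.Icc 1 (m - 1), T (i + 1) (x m) := by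
    have := shiftIcc (fun i => T i (x m)) (m - 1)
    rw [hmm] at this
    exact this
  have splitK : ∑ i ∈ Finset.Icc 1 m, T i (x (i - 1))
      = T 1 (x 0) + ∑ i ∈ Finset.Icc 1 (m - 1), T (i + 1) (x i) := by
    conv_lhs => rw [← hmm]
    rw [shiftIcc (fun i => T i (x (i - 1))) (m - 1)]
    simp
  have h5 : ∑ i ∈ Finset.Icc 1 (m - 1), T (i + 1) (x i)
      = (∑ i ∈ Finset.Icc 1 (m - 1), x i + x m) - T 1 (x m) := by
    have hk : T 1 (x m) + ∑ i ∈ Finset.Icc 1 (m - 1), T (i + 1) (x i)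
        = ∑ i ∈ Finset.Icc 1 (m - 1), x i + x m := by
      have hk0 := splitK.symm.trans key1
      rw [hx0, split] at hk0
      exact hk0
    exact eq_sub_of_add_eq' hk
  have hSshift : ∑ i ∈ Finset.Icc 1 (m - 1), T (i + 1) (x m) = S - T 1 (x m) :=
    eq_sub_of_add_eq' splitS.symm
  have hcard : ((Finset.Icc 1 (m - 1)).card : ℝ) = (m : ℝ) - 1 := by
    rw [Nat.card_Icc, Nat.add_sub_cancel, Nat.cast_sub hm1, Nat.cast_one]
  have hA : ∑ i ∈ Finset.Icc 1 (m - 1), (x i - x m)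
      = ∑ i ∈ Finset.Icc 1 (m - 1), x i - ((m:ℝ) - 1) • x m := by
    rw [Finset.sum_sub_distrib, Finset.sum_const, ← hcard, Nat.cast_smul_eq_nsmul ℝ]
  have hB : ∑ i ∈ Finset.Icc 1 (m - 1), (T (i + 1) (x m) - T (i + 1) (x i))
      = S - T 1 (x m) - (∑ i ∈ Finset.Icc 1 (m - 1), x i + x m - T 1 (x m)) := by
    rw [Finset.sum_sub_distrib, hSshift, h5]
  have main : S - (m:ℝ) • x m
      = ∑ i ∈ Finset.Icc 1 (m - 1), (x i - x m)
        + ∑ i ∈ Finset.Icc 1 (m - 1), (T (i + 1) (x m) - T (i + 1) (x i)) := by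
    rw [hA, hB, sub_smul, one_smul]
    abel
  have goal2 : (m:ℝ)⁻¹ • S - x m
      = (m:ℝ)⁻¹ • (∑ i ∈ Finset.Icc 1 (m - 1), (x i - x m))
        + (m:ℝ)⁻¹ • (∑ i ∈ Finset.Icc 1 (m - 1), (T (i + 1) (x m) - T (i + 1) (x i))) := by
    rw [← smul_add, ← main, smul_sub, smul_smul, inv_mul_cancel₀ hm0, one_smul]
  refine ⟨goal2, ?_⟩
  have hinv : (0:ℝ) ≤ (m:ℝ)⁻¹ := by positivity
  have hbA : ‖∑ i ∈ Finset.Icc 1 (m - 1), (x i - x m)‖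
      ≤ ∑ i ∈ Finset.Icc 1 (m - 1), ‖x m - x i‖ := by
    refine (norm_sum_le _ _).trans (le_of_eq (Finset.sum_congr rfl fun i hi => ?_))
    rw [norm_sub_rev]
  have hbB : ‖∑ i ∈ Finset.Icc 1 (m - 1), (T (i + 1) (x m) - T (i + 1) (x i))‖
      ≤ ∑ i ∈ Finset.Icc 1 (m - 1), ‖x m - x i‖ := by
    refine (norm_sum_le _ _).trans (Finset.sum_le_sum fun i hi => ?_)
    rw [Finset.mem_Icc] at hi
    exact hne (i + 1) (Finset.mem_Icc.mpr (by omega)) (x m) (hxD m le_rfl)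
      (x i) (hxD i (by omega))
  rw [goal2]
  calc ‖(m:ℝ)⁻¹ • (∑ i ∈ Finset.Icc 1 (m - 1), (x i - x m))
        + (m:ℝ)⁻¹ • (∑ i ∈ Finset.Icc 1 (m - 1), (T (i + 1) (x m) - T (i + 1) (x i)))‖
      ≤ ‖(m:ℝ)⁻¹ • (∑ i ∈ Finset.Icc 1 (m - 1), (x i - x m))‖
        + ‖(m:ℝ)⁻¹ • (∑ i ∈ Finset.Icc 1 (m - 1), (T (i + 1) (x m) - T (i + 1) (x i)))‖ :=
      norm_add_le _ _
    _ = (m:ℝ)⁻¹ * ‖∑ i ∈ Finset.Icc 1 (m - 1), (x i - x m)‖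
        + (m:ℝ)⁻¹ * ‖∑ i ∈ Finset.Icc 1 (m - 1), (T (i + 1) (x m) - T (i + 1) (x i))‖ := by
      rw [norm_smul, norm_smul, Real.norm_of_nonneg hinv]
    _ ≤ (m:ℝ)⁻¹ * (∑ i ∈ Finset.Icc 1 (m - 1), ‖x m - x i‖)
        + (m:ℝ)⁻¹ * (∑ i ∈ Finset.Icc 1 (m - 1), ‖x m - x i‖) :=
      add_le_add (mul_le_mul_of_nonneg_left hbA hinv) (mul_le_mul_of_nonneg_left hbB hinv)
    _ = (2 / m) * ∑ i ∈ Finset.Icc 1 (m - 1), ‖x m - x i‖ := by ring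
end

section
/- Suppose for each ε in (0,η) there is a cycle (x_1^ε,...,x_m^ε) of the under-relaxed operators with (x_m^ε) bounded as ε → 0. Then all coordinates (x_i^ε) are bounded, ‖x_i^ε − x_{i−1}^ε‖ → 0 as ε → 0 for each i (cyclically), and T x_m^ε − x_m^ε → 0 strongly as ε → 0. Consequently Fix T ≠ ∅ and every weak sequential cluster point of (x_1^ε,...,x_m^ε) is of the form (x,...,x) with x ∈ Fix T. -/
/-!
For `ε ≤ 1` the relaxed step `w ↦ w + ε (S w - w)` of a nonexpansive `S` moves the distance to
any `d ∈ D` by at most `ε ‖S d - d‖`, so a cycle stays in a bounded region around `x_m`; every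
step then has length `O(ε)`, hence `‖x_m - x_i‖ = O(ε)`. Closing the cycle forces
`∑ (T_i x_{i-1} - x_{i-1}) = 0`, and comparing with `∑ (T_i x_m - x_m)` term by term gives
`‖T x_m - x_m‖ = O(ε)`. Along an ultrafilter the bounded family `x_m` has a weak limit
(Banach–Alaoglu and Riesz); it lies in the weakly closed set `D`, and demiclosedness of `Id - T`
makes every weak limit of approximate fixed points a fixed point.
-/

open Filter Topology
open scoped RealInnerProductSpace

section NormedGroup

variable {E : Type*} [SeminormedAddCommGroup E]

theorem norm_sub_self_le_of_norm_sub_le {S : E → E} {w d : E} (hS : ‖S w - S d‖ ≤ ‖w - d‖) :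
    ‖S w - w‖ ≤ 2 * ‖w - d‖ + ‖S d - d‖ :=
  calc ‖S w - w‖ = ‖(S w - S d) + (S d - d) + (d - w)‖ := by congr 1; abel
    _ ≤ ‖S w - S d‖ + ‖S d - d‖ + ‖d - w‖ := norm_add₃_le
    _ ≤ 2 * ‖w - d‖ + ‖S d - d‖ := by rw [norm_sub_rev d w]; linarith

theorem norm_sub_le_of_norm_succ_sub_le {f : ℕ → E} {n : ℕ} {a : ℝ}
    (h : ∀ i < n, ‖f (i + 1) - f i‖ ≤ a) {i : ℕ} (hi : i ≤ n) :
    ‖f n - f i‖ ≤ (n - i : ℕ) * a := by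
  rw [← dist_eq_norm, dist_comm]
  calc dist (f i) (f n) ≤ ∑ _k ∈ Finset.Ico i n, a :=
        dist_le_Ico_sum_of_dist_le hi fun _ hk => by rw [dist_comm, dist_eq_norm]; exact h _ hk
    _ = (n - i : ℕ) * a := by simp

theorem norm_sum_sub_le_of_sum_sub_eq_zero {ι : Type*} {s : Finset ι} {S : ι → E → E} {y : E}
    {z : ι → E} (hS : ∀ i ∈ s, ‖S i y - S i (z i)‖ ≤ ‖y - z i‖)
    (h0 : ∑ i ∈ s, (S i (z i) - z i) = 0) :
    ‖∑ i ∈ s, (S i y - y)‖ ≤ 2 * ∑ i ∈ s, ‖y - z i‖ := by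
  have hdecomp : ∑ i ∈ s, (S i y - y) = ∑ i ∈ s, ((S i y - S i (z i)) - (y - z i)) := by
    rw [← sub_zero (∑ i ∈ s, (S i y - y)), ← h0, ← Finset.sum_sub_distrib]
    exact Finset.sum_congr rfl fun i _ => by abel
  rw [hdecomp, Finset.mul_sum]
  refine (norm_sum_le _ _).trans (Finset.sum_le_sum fun i hi => ?_)
  linarith [norm_sub_le (S i y - S i (z i)) (y - z i), hS i hi]

theorem tendsto_nhdsWithin_zero_of_norm_le_mul {s : Set ℝ} {f : ℝ → E} {K : ℝ}
    (h : ∀ ε ∈ s, ‖f ε‖ ≤ ε * K) : Tendsto f (𝓝[s] 0) (𝓝 0) :=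
  squeeze_zero_norm' (eventually_nhdsWithin_of_forall h)
    (((continuous_id.mul continuous_const).tendsto' 0 0 (zero_mul K)).mono_left
      nhdsWithin_le_nhds)

variable [NormedSpace ℝ E]

theorem norm_add_smul_sub_sub_le {S : E → E} {w d : E} {ε : ℝ} (hε0 : 0 ≤ ε) (hε1 : ε ≤ 1)
    (hS : ‖S w - S d‖ ≤ ‖w - d‖) :
    ‖w + ε • (S w - w) - d‖ ≤ ‖w - d‖ + ε * ‖S d - d‖ := by
  have hsplit : w + ε • (S w - w) - d = (1 - ε) • (w - d) + ε • (S w - S d) + ε • (S d - d) := by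
    module
  calc ‖w + ε • (S w - w) - d‖
      ≤ ‖(1 - ε) • (w - d)‖ + ‖ε • (S w - S d)‖ + ‖ε • (S d - d)‖ := hsplit ▸ norm_add₃_le
    _ = (1 - ε) * ‖w - d‖ + ε * ‖S w - S d‖ + ε * ‖S d - d‖ := by
      rw [norm_smul, norm_smul, norm_smul, Real.norm_of_nonneg (sub_nonneg.2 hε1),
        Real.norm_of_nonneg hε0]
    _ ≤ ‖w - d‖ + ε * ‖S d - d‖ := by nlinarith

noncomputable def meanMap (m : ℕ) (T : ℕ → E → E) (w : E) : E :=
  (m : ℝ)⁻¹ • ∑ i ∈ Finset.Icc 1 m, T i w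

theorem meanMap_sub_self {m : ℕ} (hm : m ≠ 0) (T : ℕ → E → E) (w : E) :
    meanMap m T w - w = (m : ℝ)⁻¹ • ∑ i ∈ Finset.Icc 1 m, (T i w - w) := by
  rw [meanMap, Finset.sum_sub_distrib, smul_sub, Finset.sum_const, Nat.card_Icc,
    Nat.add_sub_cancel, ← Nat.cast_smul_eq_nsmul ℝ, smul_smul,
    inv_mul_cancel₀ (Nat.cast_ne_zero.2 hm), one_smul]

theorem norm_meanMap_sub_meanMap_le {D : Set E} {m : ℕ} {T : ℕ → E → E}
    (hT : ∀ i ∈ Finset.Icc 1 m, ∀ a ∈ D, ∀ b ∈ D, ‖T i a - T i b‖ ≤ ‖a - b‖)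
    {a b : E} (ha : a ∈ D) (hb : b ∈ D) :
    ‖meanMap m T a - meanMap m T b‖ ≤ ‖a - b‖ := by
  rw [meanMap, meanMap, ← smul_sub, ← Finset.sum_sub_distrib, norm_smul, norm_inv,
    Real.norm_natCast]
  calc (m : ℝ)⁻¹ * ‖∑ i ∈ Finset.Icc 1 m, (T i a - T i b)‖
      ≤ (m : ℝ)⁻¹ * ∑ _i ∈ Finset.Icc 1 m, ‖a - b‖ := by
        gcongr; exact norm_sum_le_of_le _ fun i hi => hT i hi a ha b hb
    _ = ((m : ℝ)⁻¹ * m) * ‖a - b‖ := by simp [Nat.card_Icc, mul_assoc]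
    _ ≤ ‖a - b‖ := mul_le_of_le_one_left (norm_nonneg _) (inv_mul_le_one_of_le₀ le_rfl (by simp))

end NormedGroup

section RelaxedCycle

variable {E : Type*} [SeminormedAddCommGroup E] [NormedSpace ℝ E]

def IsRelaxedCycle (D : Set E) (T : ℕ → E → E) (m : ℕ) (ε : ℝ) (x : ℕ → E) : Prop :=
  (∀ i ≤ m, x i ∈ D) ∧ x 0 = x m ∧
    ∀ i ∈ Finset.Icc 1 m, x i = x (i - 1) + ε • (T i (x (i - 1)) - x (i - 1))

namespace IsRelaxedCycle

variable {D : Set E} {T : ℕ → E → E} {m : ℕ} {ε : ℝ} {x : ℕ → E}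

theorem succ_eq (hx : IsRelaxedCycle D T m ε x) {i : ℕ} (hi : i < m) :
    x (i + 1) = x i + ε • (T (i + 1) (x i) - x i) :=
  hx.2.2 (i + 1) (Finset.mem_Icc.2 ⟨by omega, hi⟩)

theorem sum_sub_eq_zero (hx : IsRelaxedCycle D T m ε x) (hε : ε ≠ 0) :
    ∑ i ∈ Finset.Icc 1 m, (T i (x (i - 1)) - x (i - 1)) = 0 := by
  refine (smul_eq_zero.1 ?_).resolve_left hε
  calc ε • ∑ i ∈ Finset.Icc 1 m, (T i (x (i - 1)) - x (i - 1))
      = ∑ i ∈ Finset.Icc 1 m, (x i - x (i - 1)) := by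
        rw [Finset.smul_sum]
        exact Finset.sum_congr rfl fun i hi => by rw [hx.2.2 i hi, add_sub_cancel_left]
    _ = ∑ i ∈ Finset.range m, (x (i + 1) - x i) := by
        rw [← Finset.Ico_add_one_right_eq_Icc, Finset.range_eq_Ico]
        exact (Finset.sum_Ico_add' (fun i => x i - x (i - 1)) 0 m 1).symm
    _ = 0 := by rw [Finset.sum_range_sub, hx.2.1, sub_self]

theorem norm_sub_le_add_mul (hx : IsRelaxedCycle D T m ε x)
    (hT : ∀ i ∈ Finset.Icc 1 m, ∀ a ∈ D, ∀ b ∈ D, ‖T i a - T i b‖ ≤ ‖a - b‖)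
    (hε0 : 0 ≤ ε) (hε1 : ε ≤ 1) {d : E} (hd : d ∈ D) {c : ℝ}
    (hc : ∀ i ∈ Finset.Icc 1 m, ‖T i d - d‖ ≤ c) {i : ℕ} (hi : i ≤ m) :
    ‖x i - d‖ ≤ ‖x m - d‖ + i * c := by
  induction i with
  | zero => simp [hx.2.1]
  | succ i ih =>
    have hi' : i + 1 ∈ Finset.Icc 1 m := Finset.mem_Icc.2 ⟨by omega, hi⟩
    rw [hx.succ_eq hi]
    calc ‖x i + ε • (T (i + 1) (x i) - x i) - d‖
        ≤ ‖x i - d‖ + ε * ‖T (i + 1) d - d‖ :=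
          norm_add_smul_sub_sub_le hε0 hε1 (hT _ hi' _ (hx.1 i (by omega)) d hd)
      _ ≤ ‖x m - d‖ + i * c + c :=
          add_le_add (ih (by omega)) ((mul_le_of_le_one_left (norm_nonneg _) hε1).trans (hc _ hi'))
      _ = ‖x m - d‖ + (i + 1 : ℕ) * c := by push_cast; ring

theorem norm_succ_sub_le (hx : IsRelaxedCycle D T m ε x)
    (hT : ∀ i ∈ Finset.Icc 1 m, ∀ a ∈ D, ∀ b ∈ D, ‖T i a - T i b‖ ≤ ‖a - b‖)
    (hε0 : 0 ≤ ε) {d : E} (hd : d ∈ D) {c : ℝ} (hc : ∀ i ∈ Finset.Icc 1 m, ‖T i d - d‖ ≤ c) {r : ℝ}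
    (hr : ∀ i ≤ m, ‖x i - d‖ ≤ r) {i : ℕ} (hi : i < m) :
    ‖x (i + 1) - x i‖ ≤ ε * (2 * r + c) := by
  have hi' : i + 1 ∈ Finset.Icc 1 m := Finset.mem_Icc.2 ⟨by omega, hi⟩
  rw [hx.succ_eq hi, add_sub_cancel_left, norm_smul, Real.norm_of_nonneg hε0]
  gcongr
  calc ‖T (i + 1) (x i) - x i‖ ≤ 2 * ‖x i - d‖ + ‖T (i + 1) d - d‖ :=
        norm_sub_self_le_of_norm_sub_le (hT _ hi' _ (hx.1 i hi.le) d hd)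
    _ ≤ 2 * r + c := by linarith [hr i hi.le, hc _ hi']

theorem norm_meanMap_sub_le (hx : IsRelaxedCycle D T m ε x)
    (hT : ∀ i ∈ Finset.Icc 1 m, ∀ a ∈ D, ∀ b ∈ D, ‖T i a - T i b‖ ≤ ‖a - b‖)
    (hm : m ≠ 0) (hε : ε ≠ 0) {K : ℝ} (hK : ∀ i ≤ m, ‖x m - x i‖ ≤ K) :
    ‖meanMap m T (x m) - x m‖ ≤ 2 * K := by
  have hpred (i) (hi : i ∈ Finset.Icc 1 m) : i - 1 ≤ m :=
    (Nat.sub_le _ _).trans (Finset.mem_Icc.1 hi).2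
  have hsum : ‖∑ i ∈ Finset.Icc 1 m, (T i (x m) - x m)‖
      ≤ 2 * ∑ i ∈ Finset.Icc 1 m, ‖x m - x (i - 1)‖ :=
    norm_sum_sub_le_of_sum_sub_eq_zero
      (fun i hi => hT i hi _ (hx.1 m le_rfl) _ (hx.1 _ (hpred i hi)))
      (hx.sum_sub_eq_zero hε)
  rw [meanMap_sub_self hm, norm_smul, norm_inv, Real.norm_natCast]
  calc (m : ℝ)⁻¹ * ‖∑ i ∈ Finset.Icc 1 m, (T i (x m) - x m)‖
      ≤ (m : ℝ)⁻¹ * (2 * ∑ _i ∈ Finset.Icc 1 m, K) := by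
        gcongr
        exact hsum.trans (by gcongr with i hi; exact hK _ (hpred i hi))
    _ = 2 * K := by
        rw [Finset.sum_const, Nat.card_Icc, Nat.add_sub_cancel, nsmul_eq_mul]
        field_simp

end IsRelaxedCycle

theorem exists_bounds_of_isRelaxedCycle {D : Set E} {T : ℕ → E → E} {m : ℕ}
    (hT : ∀ i ∈ Finset.Icc 1 m, ∀ a ∈ D, ∀ b ∈ D, ‖T i a - T i b‖ ≤ ‖a - b‖) {η : ℝ}
    (hη : η ≤ 1) {x : ℝ → ℕ → E} (hx : ∀ ε ∈ Set.Ioo 0 η, IsRelaxedCycle D T m ε (x ε))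
    {d : E} (hd : d ∈ D) {β : ℝ} (hβ : ∀ ε ∈ Set.Ioo 0 η, ‖x ε m‖ ≤ β) :
    ∃ β' K : ℝ, (∀ ε ∈ Set.Ioo 0 η, ∀ i ≤ m, ‖x ε i‖ ≤ β') ∧
      ∀ ε ∈ Set.Ioo 0 η, ∀ i ≤ m, ‖x ε m - x ε i‖ ≤ ε * K := by
  set c := ∑ i ∈ Finset.Icc 1 m, ‖T i d - d‖
  have hc : ∀ i ∈ Finset.Icc 1 m, ‖T i d - d‖ ≤ c := fun i hi =>
    Finset.single_le_sum (f := fun i => ‖T i d - d‖) (fun _ _ => norm_nonneg _) hi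
  have hc0 : 0 ≤ c := Finset.sum_nonneg fun _ _ => norm_nonneg _
  set r := β + ‖d‖ + m * c
  have hr : ∀ ε ∈ Set.Ioo 0 η, ∀ i ≤ m, ‖x ε i - d‖ ≤ r := by
    intro ε hε i hi
    calc ‖x ε i - d‖ ≤ ‖x ε m - d‖ + i * c :=
          (hx ε hε).norm_sub_le_add_mul hT hε.1.le (hε.2.le.trans hη) hd hc hi
      _ ≤ (β + ‖d‖) + m * c := by
          gcongr
          exact (norm_sub_le _ _).trans (by linarith [hβ ε hε])
  refine ⟨r + ‖d‖, m * (2 * r + c), fun ε hε i hi => ?_, fun ε hε i hi => ?_⟩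
  · linarith [norm_sub_norm_le (x ε i) d, hr ε hε i hi]
  · have hr0 : 0 ≤ r := (norm_nonneg _).trans (hr ε hε m le_rfl)
    calc ‖x ε m - x ε i‖ ≤ (m - i : ℕ) * (ε * (2 * r + c)) :=
          norm_sub_le_of_norm_succ_sub_le
            (fun j hj => (hx ε hε).norm_succ_sub_le hT hε.1.le hd hc (hr ε hε) hj) hi
      _ ≤ m * (ε * (2 * r + c)) := by
          have : 0 ≤ ε := hε.1.le
          gcongr
          exact Nat.sub_le m i
      _ = ε * (m * (2 * r + c)) := by ring

end RelaxedCycle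

section WeakLimits

variable {H : Type*} [NormedAddCommGroup H] [InnerProductSpace ℝ H] {α : Type*}

def TendstoWeakly (y : α → H) (l : Filter α) (p : H) : Prop :=
  ∀ v : H, Tendsto (fun n => ⟪y n, v⟫) l (𝓝 ⟪p, v⟫)

-- Banach–Alaoglu in the dual, then Riesz representation.
theorem exists_tendstoWeakly_of_eventually_norm_le [CompleteSpace H] (U : Ultrafilter α)
    {y : α → H} {β : ℝ} (hy : ∀ᶠ n in U, ‖y n‖ ≤ β) : ∃ p, TendstoWeakly y U p := by
  let f : α → WeakDual ℝ H := fun n => StrongDual.toWeakDual (InnerProductSpace.toDual ℝ H (y n))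
  obtain ⟨g, -, hg⟩ := (WeakDual.isCompact_closedBall (0 : StrongDual ℝ H) β).ultrafilter_le_nhds
    (U.map f) (by
      rw [Ultrafilter.coe_map, le_principal_iff]
      exact hy.mono fun n hn => by simpa [f] using hn)
  refine ⟨(InnerProductSpace.toDual ℝ H).symm (WeakDual.toStrongDual g), fun v => ?_⟩
  rw [InnerProductSpace.toDual_symm_apply]
  exact ((WeakDual.eval_continuous v).tendsto g).comp hg

variable {l : Filter α} [l.NeBot] {y : α → H} {p : H}

theorem TendstoWeakly.eq_of_tendsto_sub {z : α → H} {q : H} (hy : TendstoWeakly y l p)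
    (hz : TendstoWeakly z l q) (hyz : Tendsto (fun n => y n - z n) l (𝓝 0)) : p = q := by
  have h1 : Tendsto (fun n => ⟪y n - z n, p - q⟫) l (𝓝 ⟪p - q, p - q⟫) := by
    simp only [inner_sub_left]
    exact (hy _).sub (hz _)
  have h2 : Tendsto (fun n => ⟪y n - z n, p - q⟫) l (𝓝 0) := by
    simpa using hyz.inner (tendsto_const_nhds (x := p - q))
  exact sub_eq_zero.1 (real_inner_self_nonpos.1 (tendsto_nhds_unique h1 h2).le)

-- The metric projection `q` of `p` onto `D` satisfies `⟪p - q, w - q⟫ ≤ 0` on `D`;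
-- letting `w = y n` gives `‖p - q‖² ≤ 0` in the limit.
theorem TendstoWeakly.mem_of_eventually_mem [CompleteSpace H] {D : Set H} (hDc : IsClosed D)
    (hDconv : Convex ℝ D) (hy : TendstoWeakly y l p) (hyD : ∀ᶠ n in l, y n ∈ D) : p ∈ D := by
  obtain ⟨n, hn⟩ := hyD.exists
  obtain ⟨q, hqD, hq⟩ :=
    exists_norm_eq_iInf_of_complete_convex ⟨y n, hn⟩ hDc.isComplete hDconv p
  have hproj := (norm_eq_iInf_iff_real_inner_le_zero hDconv hqD).1 hq
  have hlim : Tendsto (fun n => ⟪y n - q, p - q⟫) l (𝓝 ⟪p - q, p - q⟫) := by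
    simp only [inner_sub_left]
    exact (hy _).sub tendsto_const_nhds
  have hpq : ⟪p - q, p - q⟫ ≤ 0 :=
    le_of_tendsto hlim (hyD.mono fun n hn => real_inner_comm (y n - q) _ ▸ hproj _ hn)
  rwa [sub_eq_zero.1 (real_inner_self_nonpos.1 hpq)]

-- Demiclosedness of `Id - S`: expand `‖y n - S p‖² = ‖(y n - p) + (p - S p)‖²` and bound it by
-- `(‖S (y n) - y n‖ + ‖y n - p‖)²`; the cross term vanishes weakly.
theorem TendstoWeakly.apply_eq_of_tendsto_sub {D : Set H} {S : H → H}
    (hS : ∀ a ∈ D, ∀ b ∈ D, ‖S a - S b‖ ≤ ‖a - b‖) (hy : TendstoWeakly y l p)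
    (hyD : ∀ᶠ n in l, y n ∈ D) (hpD : p ∈ D) {β : ℝ} (hyb : ∀ᶠ n in l, ‖y n‖ ≤ β)
    (hres : Tendsto (fun n => S (y n) - y n) l (𝓝 0)) : S p = p := by
  set δ := fun n => ‖S (y n) - y n‖
  have hδ : Tendsto δ l (𝓝 0) := by simpa using hres.norm
  have hkey : ∀ᶠ n in l,
      ‖p - S p‖ ^ 2 ≤ δ n * (δ n + 2 * (β + ‖p‖)) - 2 * ⟪y n - p, p - S p⟫ := by
    filter_upwards [hyD, hyb] with n hn hnb
    have hexp := norm_add_sq_real (y n - p) (p - S p)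
    rw [sub_add_sub_cancel] at hexp
    have htri : ‖y n - S p‖ ≤ δ n + ‖y n - p‖ :=
      calc ‖y n - S p‖ ≤ ‖y n - S (y n)‖ + ‖S (y n) - S p‖ :=
            norm_sub_le_norm_sub_add_norm_sub _ _ _
        _ ≤ δ n + ‖y n - p‖ := by rw [norm_sub_rev]; exact add_le_add le_rfl (hS _ hn _ hpD)
    have hyp : ‖y n - p‖ ≤ β + ‖p‖ := (norm_sub_le _ _).trans (by linarith)
    have hsq := pow_le_pow_left₀ (norm_nonneg _) htri 2
    nlinarith [mul_le_mul_of_nonneg_left hyp (norm_nonneg (S (y n) - y n))]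
  have hcross : Tendsto (fun n => ⟪y n - p, p - S p⟫) l (𝓝 0) := by
    simpa [inner_sub_left] using (hy (p - S p)).sub_const ⟪p, p - S p⟫
  have hrhs : Tendsto (fun n => δ n * (δ n + 2 * (β + ‖p‖)) - 2 * ⟪y n - p, p - S p⟫) l (𝓝 0) := by
    simpa using (hδ.mul (hδ.add_const _)).sub (hcross.const_mul 2)
  have hsq : ‖p - S p‖ ^ 2 ≤ 0 := ge_of_tendsto hrhs hkey
  exact (sub_eq_zero.1 (norm_eq_zero.1 (by nlinarith [norm_nonneg (p - S p)]))).symm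

theorem exists_fixedPoint_of_tendsto_sub [CompleteSpace H] {D : Set H} (hDc : IsClosed D)
    (hDconv : Convex ℝ D) {S : H → H} (hS : ∀ a ∈ D, ∀ b ∈ D, ‖S a - S b‖ ≤ ‖a - b‖)
    (hyD : ∀ᶠ n in l, y n ∈ D) {β : ℝ} (hyb : ∀ᶠ n in l, ‖y n‖ ≤ β)
    (hres : Tendsto (fun n => S (y n) - y n) l (𝓝 0)) : ∃ p ∈ D, S p = p := by
  have hU := Ultrafilter.of_le l
  obtain ⟨p, hp⟩ := exists_tendstoWeakly_of_eventually_norm_le (Ultrafilter.of l) (hU hyb)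
  have hpD := hp.mem_of_eventually_mem hDc hDconv (hU hyD)
  exact ⟨p, hpD, hp.apply_eq_of_tendsto_sub hS (hU hyD) hpD (hU hyb) (hres.mono_left hU)⟩

end WeakLimits

theorem stmt7_general {H : Type*} [NormedAddCommGroup H] [InnerProductSpace ℝ H] [CompleteSpace H]
    (D : Set H) (hD : D.Nonempty) (hDc : IsClosed D) (hDconv : Convex ℝ D)
    (m : ℕ) (hm : 2 ≤ m) (T : ℕ → H → H)
    (hne : ∀ i ∈ Finset.Icc 1 m, ∀ x ∈ D, ∀ y ∈ D, ‖T i x - T i y‖ ≤ ‖x - y‖)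
    (η : ℝ) (hη : η ∈ Set.Ioc (0:ℝ) 1)
    (x : ℝ → ℕ → H)
    (hxD : ∀ ε ∈ Set.Ioo 0 η, ∀ i ≤ m, x ε i ∈ D)
    (hx0 : ∀ ε ∈ Set.Ioo 0 η, x ε 0 = x ε m)
    (hcyc : ∀ ε ∈ Set.Ioo 0 η, ∀ i ∈ Finset.Icc 1 m,
      x ε i = x ε (i - 1) + ε • (T i (x ε (i - 1)) - x ε (i - 1)))
    (hbdd : ∃ β : ℝ, ∀ ε ∈ Set.Ioo 0 η, ‖x ε m‖ ≤ β) :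
    (∃ β' : ℝ, ∀ ε ∈ Set.Ioo 0 η, ∀ i ≤ m, ‖x ε i‖ ≤ β') ∧
    (∀ i ∈ Finset.Icc 1 m,
      Tendsto (fun ε => ‖x ε i - x ε (i - 1)‖) (𝓝[Set.Ioo 0 η] 0) (𝓝 0)) ∧
    (Tendsto (fun ε => (m:ℝ)⁻¹ • (∑ i ∈ Finset.Icc 1 m, T i (x ε m)) - x ε m)
      (𝓝[Set.Ioo 0 η] 0) (𝓝 0)) ∧
    (∃ p ∈ D, (m:ℝ)⁻¹ • (∑ i ∈ Finset.Icc 1 m, T i p) = p) ∧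
    (∀ εn : ℕ → ℝ, (∀ n, εn n ∈ Set.Ioo 0 η) → Tendsto εn atTop (𝓝 0) →
      ∀ l : ℕ → H,
        (∀ i ∈ Finset.Icc 1 m, ∀ v : H,
          Tendsto (fun n => ⟪x (εn n) i, v⟫) atTop (𝓝 ⟪l i, v⟫)) →
        (∀ i ∈ Finset.Icc 1 m, l i = l m) ∧ l m ∈ D ∧
          (m:ℝ)⁻¹ • (∑ i ∈ Finset.Icc 1 m, T i (l m)) = l m) := by
  obtain ⟨d, hd⟩ := hD
  obtain ⟨β, hβ⟩ := hbdd
  have hcycle (ε) (hε : ε ∈ Set.Ioo 0 η) : IsRelaxedCycle D T m ε (x ε) :=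
    ⟨hxD ε hε, hx0 ε hε, hcyc ε hε⟩
  obtain ⟨β', K, hbound, hgap⟩ := exists_bounds_of_isRelaxedCycle hne hη.2 hcycle hd hβ
  have hmm : m ∈ Finset.Icc 1 m := Finset.mem_Icc.2 ⟨by omega, le_rfl⟩
  have hgap_lim (i) (hi : i ≤ m) :
      Tendsto (fun ε => x ε m - x ε i) (𝓝[Set.Ioo 0 η] 0) (𝓝 0) :=
    tendsto_nhdsWithin_zero_of_norm_le_mul fun ε hε => hgap ε hε i hi
  have hres : Tendsto (fun ε => meanMap m T (x ε m) - x ε m) (𝓝[Set.Ioo 0 η] 0) (𝓝 0) :=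
    tendsto_nhdsWithin_zero_of_norm_le_mul (K := 2 * K) fun ε hε =>
      ((hcycle ε hε).norm_meanMap_sub_le hne (by omega) hε.1.ne' (hgap ε hε)).trans_eq (by ring)
  have hmean (a) (ha : a ∈ D) (b) (hb : b ∈ D) : ‖meanMap m T a - meanMap m T b‖ ≤ ‖a - b‖ :=
    norm_meanMap_sub_meanMap_le hne ha hb
  have : (𝓝[Set.Ioo 0 η] (0 : ℝ)).NeBot := left_nhdsWithin_Ioo_neBot hη.1
  have hmemD : ∀ᶠ ε in 𝓝[Set.Ioo 0 η] 0, x ε m ∈ D :=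
    eventually_nhdsWithin_of_forall fun ε hε => hxD ε hε m le_rfl
  have hbdd' : ∀ᶠ ε in 𝓝[Set.Ioo 0 η] 0, ‖x ε m‖ ≤ β :=
    eventually_nhdsWithin_of_forall hβ
  refine ⟨⟨β', hbound⟩, fun i hi => ?_, hres,
    exists_fixedPoint_of_tendsto_sub hDc hDconv hmean hmemD hbdd' hres, ?_⟩
  · have hi' : i ≤ m := (Finset.mem_Icc.1 hi).2
    simpa using ((hgap_lim (i - 1) (by omega)).sub (hgap_lim i hi')).norm
  intro εn hεn hεn0 l hl
  have hε : Tendsto εn atTop (𝓝[Set.Ioo 0 η] 0) :=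
    tendsto_nhdsWithin_iff.2 ⟨hεn0, Eventually.of_forall hεn⟩
  have hlm : TendstoWeakly (fun n => x (εn n) m) atTop (l m) := hl m hmm
  have hlmD : l m ∈ D := hlm.mem_of_eventually_mem hDc hDconv (hε.eventually hmemD)
  refine ⟨fun i hi => (hlm.eq_of_tendsto_sub (hl i hi)
      ((hgap_lim i (Finset.mem_Icc.1 hi).2).comp hε)).symm, hlmD, ?_⟩
  exact hlm.apply_eq_of_tendsto_sub hmean (hε.eventually hmemD) hlmD (hε.eventually hbdd')
    (hres.comp hε)

theorem stmt7 {H : Type*} [NormedAddCommGroup H] [InnerProductSpace ℝ H] [CompleteSpace H]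
    (D : Set H) (hD : D.Nonempty) (hDc : IsClosed D) (hDconv : Convex ℝ D)
    (m : ℕ) (hm : 2 ≤ m) (T : ℕ → H → H)
    (hmap : ∀ i ∈ Finset.Icc 1 m, Set.MapsTo (T i) D D)
    (hne : ∀ i ∈ Finset.Icc 1 m, ∀ x ∈ D, ∀ y ∈ D, ‖T i x - T i y‖ ≤ ‖x - y‖)
    (η : ℝ) (hη : η ∈ Set.Ioc (0:ℝ) 1)
    (x : ℝ → ℕ → H)
    (hxD : ∀ ε ∈ Set.Ioo 0 η, ∀ i ≤ m, x ε i ∈ D)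
    (hx0 : ∀ ε ∈ Set.Ioo 0 η, x ε 0 = x ε m)
    (hcyc : ∀ ε ∈ Set.Ioo 0 η, ∀ i ∈ Finset.Icc 1 m,
      x ε i = x ε (i - 1) + ε • (T i (x ε (i - 1)) - x ε (i - 1)))
    (hbdd : ∃ β : ℝ, ∀ ε ∈ Set.Ioo 0 η, ‖x ε m‖ ≤ β) :
    (∃ β' : ℝ, ∀ ε ∈ Set.Ioo 0 η, ∀ i ≤ m, ‖x ε i‖ ≤ β') ∧
    (∀ i ∈ Finset.Icc 1 m,
      Tendsto (fun ε => ‖x ε i - x ε (i - 1)‖) (𝓝[Set.Ioo 0 η] 0) (𝓝 0)) ∧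
    (Tendsto (fun ε => (m:ℝ)⁻¹ • (∑ i ∈ Finset.Icc 1 m, T i (x ε m)) - x ε m)
      (𝓝[Set.Ioo 0 η] 0) (𝓝 0)) ∧
    (∃ p ∈ D, (m:ℝ)⁻¹ • (∑ i ∈ Finset.Icc 1 m, T i p) = p) ∧
    (∀ εn : ℕ → ℝ, (∀ n, εn n ∈ Set.Ioo 0 η) → Tendsto εn atTop (𝓝 0) →
      ∀ l : ℕ → H,
        (∀ i ∈ Finset.Icc 1 m, ∀ v : H,
          Tendsto (fun n => ⟪x (εn n) i, v⟫) atTop (𝓝 ⟪l i, v⟫)) →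
        (∀ i ∈ Finset.Icc 1 m, l i = l m) ∧ l m ∈ D ∧
          (m:ℝ)⁻¹ • (∑ i ∈ Finset.Icc 1 m, T i (l m)) = l m) :=
  stmt7_general D hD hDc hDconv m hm T hne η hη x hxD hx0 hcyc hbdd
end

section
/- Under the hypotheses of the previous statement, if in addition for all x, y ∈ Fix T the scalar product ⟨x_m^ε, x − y⟩ converges as ε → 0, then there exists x̄ ∈ Fix T such that x_i^ε ⇀ x̄ weakly as ε → 0 for every i. -/
/-!
Along a closed under-relaxed cycle the displacements `T i (x (i - 1)) - x (i - 1)` sum to zero,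
while consecutive iterates are `O(ε)` apart. Hence every `x ε i` is within `O(ε)` of `x ε m`, and
`x ε m` is an `O(ε)`-approximate fixed point of the average `T` of the `T i`. By Banach–Alaoglu and
the demiclosedness of `id - T`, every weak cluster point of `x ε m` as `ε → 0` is a fixed point of
`T` in `D`; since `⟪x ε m, p - q⟫` converges for all such `p, q`, Opial's argument shows that there
is only one.
-/

open Filter Topology
open scoped RealInnerProductSpace

section Relaxation

variable {E : Type*} [NormedAddCommGroup E] {D : Set E} {f : E → E}

lemma norm_apply_sub_le (hf : ∀ x ∈ D, ∀ y ∈ D, ‖f x - f y‖ ≤ ‖x - y‖)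
    {y p : E} (hy : y ∈ D) (hp : p ∈ D) : ‖f y - p‖ ≤ ‖y - p‖ + ‖f p - p‖ :=
  calc ‖f y - p‖ = ‖(f y - f p) + (f p - p)‖ := by rw [sub_add_sub_cancel]
    _ ≤ ‖y - p‖ + ‖f p - p‖ := (norm_add_le _ _).trans (add_le_add (hf y hy p hp) le_rfl)

lemma norm_relax_sub_le_s8 [NormedSpace ℝ E] (hf : ∀ x ∈ D, ∀ y ∈ D, ‖f x - f y‖ ≤ ‖x - y‖)
    {y p : E} (hy : y ∈ D) (hp : p ∈ D) {ε : ℝ} (hε₀ : 0 ≤ ε) (hε₁ : ε ≤ 1) :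
    ‖y + ε • (f y - y) - p‖ ≤ ‖y - p‖ + ‖f p - p‖ := by
  have hfy := norm_apply_sub_le hf hy hp
  calc ‖y + ε • (f y - y) - p‖ = ‖(1 - ε) • (y - p) + ε • (f y - p)‖ := by
        congr 1; simp only [smul_sub, sub_smul, one_smul]; abel
    _ ≤ (1 - ε) * ‖y - p‖ + ε * (‖y - p‖ + ‖f p - p‖) := by
        refine (norm_add_le _ _).trans (add_le_add ?_ ?_) <;>
          rw [norm_smul, Real.norm_of_nonneg (by linarith)]
        exact mul_le_mul_of_nonneg_left hfy hε₀
    _ ≤ ‖y - p‖ + ‖f p - p‖ := by nlinarith [norm_nonneg (f p - p)]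

lemma norm_apply_sub_self_le (hf : ∀ x ∈ D, ∀ y ∈ D, ‖f x - f y‖ ≤ ‖x - y‖)
    {y p : E} (hy : y ∈ D) (hp : p ∈ D) : ‖f y - y‖ ≤ 2 * ‖y - p‖ + ‖f p - p‖ := by
  have hfy := norm_apply_sub_le hf hy hp
  calc ‖f y - y‖ = ‖(f y - p) - (y - p)‖ := by rw [sub_sub_sub_cancel_right]
    _ ≤ ‖f y - p‖ + ‖y - p‖ := norm_sub_le _ _
    _ ≤ 2 * ‖y - p‖ + ‖f p - p‖ := by linarith

lemma norm_average_sub_average_le [NormedSpace ℝ E] {ι : Type*} (s : Finset ι) {T : ι → E → E}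
    (hT : ∀ i ∈ s, ∀ x ∈ D, ∀ y ∈ D, ‖T i x - T i y‖ ≤ ‖x - y‖) :
    ∀ y ∈ D, ∀ z ∈ D,
      ‖(s.card : ℝ)⁻¹ • ∑ i ∈ s, T i y - (s.card : ℝ)⁻¹ • ∑ i ∈ s, T i z‖ ≤ ‖y - z‖ := by
  intro y hy z hz
  rcases s.eq_empty_or_nonempty with rfl | hs
  · simp
  rw [← smul_sub, ← Finset.sum_sub_distrib, norm_smul, Real.norm_of_nonneg (by positivity),
    inv_mul_le_iff₀ (by positivity)]
  calc ‖∑ i ∈ s, (T i y - T i z)‖ ≤ ∑ i ∈ s, ‖T i y - T i z‖ := norm_sum_le _ _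
    _ ≤ ∑ _i ∈ s, ‖y - z‖ := Finset.sum_le_sum fun i hi ↦ hT i hi y hy z hz
    _ = s.card * ‖y - z‖ := by rw [Finset.sum_const, nsmul_eq_mul]

end Relaxation

lemma Finset.sum_Icc_one_sub {G : Type*} [AddCommGroup G] (f : ℕ → G) (n : ℕ) :
    ∑ i ∈ Finset.Icc 1 n, (f i - f (i - 1)) = f n - f 0 := by
  induction n with
  | zero => simp
  | succ n ih =>
    rw [Finset.sum_Icc_succ_top (by omega), ih, Nat.add_sub_cancel]
    abel

section Cycle

variable {E : Type*} [NormedAddCommGroup E] [NormedSpace ℝ E] {D : Set E} {m : ℕ}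
  {T : ℕ → E → E} {ε : ℝ} {y : ℕ → E}

lemma norm_cycle_sub_le (hT : ∀ i ∈ Finset.Icc 1 m, ∀ x ∈ D, ∀ y ∈ D, ‖T i x - T i y‖ ≤ ‖x - y‖)
    (hyD : ∀ i ≤ m, y i ∈ D)
    (hcyc : ∀ i ∈ Finset.Icc 1 m, y i = y (i - 1) + ε • (T i (y (i - 1)) - y (i - 1)))
    (hε₀ : 0 ≤ ε) (hε₁ : ε ≤ 1) {p : E} (hp : p ∈ D) {C : ℝ}
    (hC : ∀ i ∈ Finset.Icc 1 m, ‖T i p - p‖ ≤ C) :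
    ∀ i ≤ m, ‖y i - p‖ ≤ ‖y 0 - p‖ + i * C := by
  intro i hi
  induction i with
  | zero => simp
  | succ i ih =>
    have hi' : i + 1 ∈ Finset.Icc 1 m := Finset.mem_Icc.mpr ⟨by omega, hi⟩
    have hstep := hcyc (i + 1) hi'
    rw [Nat.add_sub_cancel] at hstep
    rw [hstep]
    calc ‖y i + ε • (T (i + 1) (y i) - y i) - p‖ ≤ ‖y i - p‖ + ‖T (i + 1) p - p‖ :=
          norm_relax_sub_le_s8 (hT _ hi') (hyD i (by omega)) hp hε₀ hε₁
      _ ≤ ‖y 0 - p‖ + i * C + C := add_le_add (ih (by omega)) (hC _ hi')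
      _ = ‖y 0 - p‖ + ↑(i + 1) * C := by push_cast; ring

lemma norm_cycle_displacement_le
    (hT : ∀ i ∈ Finset.Icc 1 m, ∀ x ∈ D, ∀ y ∈ D, ‖T i x - T i y‖ ≤ ‖x - y‖)
    (hyD : ∀ i ≤ m, y i ∈ D)
    (hcyc : ∀ i ∈ Finset.Icc 1 m, y i = y (i - 1) + ε • (T i (y (i - 1)) - y (i - 1)))
    (hε₀ : 0 ≤ ε) (hε₁ : ε ≤ 1) {p : E} (hp : p ∈ D) {C : ℝ}
    (hC : ∀ i ∈ Finset.Icc 1 m, ‖T i p - p‖ ≤ C) :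
    ∀ i ∈ Finset.Icc 1 m, ‖T i (y (i - 1)) - y (i - 1)‖ ≤ 2 * (‖y 0 - p‖ + m * C) + C := by
  intro i hi
  have him : i - 1 ≤ m := by have := (Finset.mem_Icc.mp hi).2; omega
  have hC₀ : 0 ≤ C := (norm_nonneg _).trans (hC i hi)
  have hR := norm_cycle_sub_le hT hyD hcyc hε₀ hε₁ hp hC (i - 1) him
  have hRm : ((i - 1 : ℕ) : ℝ) * C ≤ m * C := by gcongr
  calc ‖T i (y (i - 1)) - y (i - 1)‖ ≤ 2 * ‖y (i - 1) - p‖ + ‖T i p - p‖ :=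
        norm_apply_sub_self_le (hT i hi) (hyD _ him) hp
    _ ≤ 2 * (‖y 0 - p‖ + m * C) + C := by linarith [hC i hi]

lemma norm_cycle_end_sub_le
    (hcyc : ∀ i ∈ Finset.Icc 1 m, y i = y (i - 1) + ε • (T i (y (i - 1)) - y (i - 1)))
    (hε₀ : 0 ≤ ε) {K : ℝ} (hK : ∀ i ∈ Finset.Icc 1 m, ‖T i (y (i - 1)) - y (i - 1)‖ ≤ K) :
    ∀ i ≤ m, ‖y m - y i‖ ≤ m * K * ε := by
  intro i hi
  rcases Nat.eq_zero_or_pos m with rfl | hm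
  · simp [Nat.le_zero.mp hi]
  have hstep : ∀ k ∈ Finset.Ico i m, dist (y k) (y (k + 1)) ≤ ε * K := by
    intro k hk
    have hk' : k + 1 ∈ Finset.Icc 1 m := by
      have := Finset.mem_Ico.mp hk; exact Finset.mem_Icc.mpr ⟨by omega, by omega⟩
    rw [dist_comm, dist_eq_norm, hcyc _ hk', Nat.add_sub_cancel, add_sub_cancel_left, norm_smul,
      Real.norm_of_nonneg hε₀]
    exact mul_le_mul_of_nonneg_left (hK _ hk') hε₀
  have hεK : 0 ≤ ε * K :=
    mul_nonneg hε₀ ((norm_nonneg _).trans (hK 1 (Finset.mem_Icc.mpr ⟨le_rfl, hm⟩)))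
  calc ‖y m - y i‖ = dist (y i) (y m) := by rw [dist_comm, dist_eq_norm]
    _ ≤ ∑ k ∈ Finset.Ico i m, dist (y k) (y (k + 1)) := dist_le_Ico_sum_dist y hi
    _ ≤ (Finset.Ico i m).card • (ε * K) := Finset.sum_le_card_nsmul _ _ _ hstep
    _ ≤ m * (ε * K) := by
        rw [nsmul_eq_mul, Nat.card_Ico]
        exact mul_le_mul_of_nonneg_right (by exact_mod_cast Nat.sub_le m i) hεK
    _ = m * K * ε := by ring

lemma sum_cycle_displacement_eq_zero
    (hcyc : ∀ i ∈ Finset.Icc 1 m, y i = y (i - 1) + ε • (T i (y (i - 1)) - y (i - 1)))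
    (hy₀ : y 0 = y m) (hε : ε ≠ 0) :
    ∑ i ∈ Finset.Icc 1 m, (T i (y (i - 1)) - y (i - 1)) = 0 := by
  refine (smul_eq_zero_iff_right hε).mp ?_
  calc ε • ∑ i ∈ Finset.Icc 1 m, (T i (y (i - 1)) - y (i - 1))
      = ∑ i ∈ Finset.Icc 1 m, (y i - y (i - 1)) := by
        rw [Finset.smul_sum]
        exact Finset.sum_congr rfl fun i hi ↦ by rw [hcyc i hi, add_sub_cancel_left]
    _ = 0 := by rw [Finset.sum_Icc_one_sub, hy₀, sub_self]

lemma norm_average_cycle_end_sub_le (hm : m ≠ 0)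
    (hT : ∀ i ∈ Finset.Icc 1 m, ∀ x ∈ D, ∀ y ∈ D, ‖T i x - T i y‖ ≤ ‖x - y‖)
    (hyD : ∀ i ≤ m, y i ∈ D)
    (hcyc : ∀ i ∈ Finset.Icc 1 m, y i = y (i - 1) + ε • (T i (y (i - 1)) - y (i - 1)))
    (hy₀ : y 0 = y m) (hε₀ : 0 < ε) {K : ℝ}
    (hK : ∀ i ∈ Finset.Icc 1 m, ‖T i (y (i - 1)) - y (i - 1)‖ ≤ K) :
    ‖(m : ℝ)⁻¹ • ∑ i ∈ Finset.Icc 1 m, T i (y m) - y m‖ ≤ 2 * m * K * ε := by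
  have hm' : (0 : ℝ) < m := by positivity
  have hcard : (Finset.Icc 1 m).card = m := by simp
  have hterm : ∀ i ∈ Finset.Icc 1 m,
      ‖(T i (y m) - y m) - (T i (y (i - 1)) - y (i - 1))‖ ≤ 2 * (m * K * ε) := by
    intro i hi
    have him : i - 1 ≤ m := by have := (Finset.mem_Icc.mp hi).2; omega
    have hclose := norm_cycle_end_sub_le hcyc hε₀.le hK (i - 1) him
    calc ‖(T i (y m) - y m) - (T i (y (i - 1)) - y (i - 1))‖
        = ‖(T i (y m) - T i (y (i - 1))) - (y m - y (i - 1))‖ := by congr 1; abel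
      _ ≤ ‖y m - y (i - 1)‖ + ‖y m - y (i - 1)‖ :=
          (norm_sub_le _ _).trans (add_le_add (hT i hi _ (hyD m le_rfl) _ (hyD _ him)) le_rfl)
      _ ≤ 2 * (m * K * ε) := by linarith
  have hsum : (m : ℝ)⁻¹ • ∑ i ∈ Finset.Icc 1 m, T i (y m) - y m
      = (m : ℝ)⁻¹ • ∑ i ∈ Finset.Icc 1 m,
          ((T i (y m) - y m) - (T i (y (i - 1)) - y (i - 1))) := by
    rw [Finset.sum_sub_distrib, sum_cycle_displacement_eq_zero hcyc hy₀ hε₀.ne', sub_zero,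
      Finset.sum_sub_distrib, Finset.sum_const, hcard, smul_sub, ← Nat.cast_smul_eq_nsmul ℝ,
      smul_smul, inv_mul_cancel₀ hm'.ne', one_smul]
  rw [hsum, norm_smul, Real.norm_of_nonneg (by positivity), inv_mul_le_iff₀ hm']
  calc ‖∑ i ∈ Finset.Icc 1 m, ((T i (y m) - y m) - (T i (y (i - 1)) - y (i - 1)))‖
      ≤ ∑ i ∈ Finset.Icc 1 m, ‖(T i (y m) - y m) - (T i (y (i - 1)) - y (i - 1))‖ :=
        norm_sum_le _ _
    _ ≤ (Finset.Icc 1 m).card • (2 * (m * K * ε)) := Finset.sum_le_card_nsmul _ _ _ hterm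
    _ = m * (2 * m * K * ε) := by rw [hcard, nsmul_eq_mul]; ring

end Cycle

lemma tendsto_zero_of_norm_le_mul {E : Type*} [SeminormedAddCommGroup E] {l : Filter ℝ}
    (hl : l ≤ 𝓝 0) {g : ℝ → E} {c : ℝ} (hg : ∀ᶠ ε in l, ‖g ε‖ ≤ c * ε) :
    Tendsto g l (𝓝 0) :=
  squeeze_zero_norm' hg (by simpa using (tendsto_id.const_mul c).mono_left hl)

section Weak

variable {H : Type*} [NormedAddCommGroup H] [InnerProductSpace ℝ H] {α : Type*}

def WeakTendsto (u : α → H) (l : Filter α) (p : H) : Prop :=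
  ∀ v : H, Tendsto (fun a ↦ ⟪u a, v⟫) l (𝓝 ⟪p, v⟫)

lemma WeakTendsto.congr_of_tendsto_sub {u w : α → H} {l : Filter α} {p : H}
    (h : WeakTendsto u l p) (hw : Tendsto (fun a ↦ w a - u a) l (𝓝 0)) :
    WeakTendsto w l p := by
  intro v
  have hsmall : Tendsto (fun a ↦ ⟪w a - u a, v⟫) l (𝓝 0) := by
    refine squeeze_zero_norm (fun a ↦ ?_) (by simpa using hw.norm.mul_const ‖v‖)
    rw [Real.norm_eq_abs]
    exact abs_real_inner_le_norm _ _
  simpa [inner_sub_left] using (h v).add hsmall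

/-- Banach–Alaoglu, through the Riesz representation of `H` as its dual. -/
lemma exists_weakTendsto_of_eventually_norm_le [CompleteSpace H] (U : Ultrafilter α)
    {u : α → H} {β : ℝ} (hu : ∀ᶠ a in (U : Filter α), ‖u a‖ ≤ β) :
    ∃ q, WeakTendsto u U q := by
  let φ : α → WeakDual ℝ H := fun a ↦ InnerProductSpace.toDual ℝ H (u a)
  have hball : ∀ᶠ a in (U : Filter α), φ a ∈ WeakDual.toStrongDual ⁻¹' Metric.closedBall 0 β := by
    filter_upwards [hu] with a ha
    rw [Set.mem_preimage, mem_closedBall_zero_iff]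
    exact ((InnerProductSpace.toDual ℝ H).norm_map _).trans_le ha
  obtain ⟨ψ, -, hψ⟩ := (WeakDual.isCompact_closedBall (𝕜 := ℝ) 0 β).ultrafilter_le_nhds
    (U.map φ) (le_principal_iff.mpr hball)
  refine ⟨(InnerProductSpace.toDual ℝ H).symm (WeakDual.toStrongDual ψ), fun v ↦ ?_⟩
  have := tendsto_iff_forall_eval_tendsto_topDualPairing.mp hψ v
  convert this using 2
  · simp [φ]
  · rw [InnerProductSpace.toDual_symm_apply]; rfl

lemma WeakTendsto.mem_of_isClosed_of_convex [CompleteSpace H] {l : Filter α} [l.NeBot]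
    {u : α → H} {q : H} {D : Set H} (h : WeakTendsto u l q) (hDc : IsClosed D)
    (hDconv : Convex ℝ D) (huD : ∀ᶠ a in l, u a ∈ D) : q ∈ D := by
  by_contra hq
  obtain ⟨f, c, hfD, hfq⟩ := geometric_hahn_banach_closed_point hDconv hDc hq
  set w := (InnerProductSpace.toDual ℝ H).symm f
  have hfw : ∀ z, f z = ⟪z, w⟫ := fun z ↦ by
    rw [real_inner_comm, InnerProductSpace.toDual_symm_apply]
  have hle : ⟪q, w⟫ ≤ c :=
    le_of_tendsto (h w) (huD.mono fun a ha ↦ (hfw (u a) ▸ hfD _ ha).le)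
  linarith [hfw q]

/-- Demiclosedness of `id - f` at `0`: expanding `‖u - f q‖² ≤ (‖f u - u‖ + ‖u - q‖)²` around
`q` leaves `‖q - f q‖² ≤ δ² + 2δB - 2⟪u - q, q - f q⟫` with `δ = ‖f u - u‖ → 0`. -/
lemma WeakTendsto.isFixedPt {l : Filter α} [l.NeBot] {u : α → H} {q : H} {D : Set H}
    {f : H → H} {β : ℝ} (h : WeakTendsto u l q)
    (hf : ∀ x ∈ D, ∀ y ∈ D, ‖f x - f y‖ ≤ ‖x - y‖) (hq : q ∈ D) (huD : ∀ᶠ a in l, u a ∈ D)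
    (hu : ∀ᶠ a in l, ‖u a‖ ≤ β) (hfu : Tendsto (fun a ↦ f (u a) - u a) l (𝓝 0)) :
    Function.IsFixedPt f q := by
  replace hfu : Tendsto (fun a ↦ ‖f (u a) - u a‖) l (𝓝 0) := by simpa using hfu.norm
  set r := q - f q
  set B := β + ‖q‖
  have hbound : ∀ᶠ a in l, ‖r‖ ^ 2 ≤
      ‖f (u a) - u a‖ ^ 2 + 2 * ‖f (u a) - u a‖ * B - 2 * ⟪u a - q, r⟫ := by
    filter_upwards [huD, hu] with a haD ha
    have hexp : ‖u a - f q‖ ^ 2 = ‖u a - q‖ ^ 2 + 2 * ⟪u a - q, r⟫ + ‖r‖ ^ 2 := by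
      rw [← norm_add_sq_real, sub_add_sub_cancel]
    have htri : ‖u a - f q‖ ≤ ‖f (u a) - u a‖ + ‖u a - q‖ :=
      calc ‖u a - f q‖ = ‖(u a - f (u a)) + (f (u a) - f q)‖ := by rw [sub_add_sub_cancel]
        _ ≤ ‖f (u a) - u a‖ + ‖u a - q‖ :=
          (norm_add_le _ _).trans (add_le_add (norm_sub_rev _ _).le (hf _ haD _ hq))
    have hB : ‖u a - q‖ ≤ B := (norm_sub_le _ _).trans (add_le_add ha le_rfl)
    have hsq := pow_le_pow_left₀ (norm_nonneg _) htri 2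
    nlinarith [norm_nonneg (f (u a) - u a), norm_nonneg (u a - q)]
  have hinner : Tendsto (fun a ↦ ⟪u a - q, r⟫) l (𝓝 0) := by
    simpa [inner_sub_left] using (h r).sub_const ⟪q, r⟫
  have hlim : Tendsto (fun a ↦ ‖f (u a) - u a‖ ^ 2 + 2 * ‖f (u a) - u a‖ * B
      - 2 * ⟪u a - q, r⟫) l (𝓝 0) := by
    simpa using ((hfu.pow 2).add ((hfu.const_mul 2).mul_const B)).sub (hinner.const_mul 2)
  have hr : ‖r‖ ^ 2 ≤ 0 := ge_of_tendsto hlim hbound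
  have : r = 0 := by simpa using hr
  exact (sub_eq_zero.mp this).symm

/-- Opial's argument: any two weak cluster points `p, q ∈ F` satisfy `⟪p, p - q⟫ = ⟪q, p - q⟫`. -/
lemma exists_weakTendsto_of_tendsto_inner_sub [CompleteSpace H] {l : Filter α} [l.NeBot]
    {u : α → H} {β : ℝ} (hu : ∀ᶠ a in l, ‖u a‖ ≤ β) {F : Set H}
    (hcluster : ∀ U : Ultrafilter α, ↑U ≤ l → ∀ q, WeakTendsto u U q → q ∈ F)
    (hconv : ∀ p ∈ F, ∀ q ∈ F, ∃ L, Tendsto (fun a ↦ ⟪u a, p - q⟫) l (𝓝 L)) :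
    ∃ p ∈ F, WeakTendsto u l p := by
  have hlim : ∀ U : Ultrafilter α, ↑U ≤ l → ∃ q ∈ F, WeakTendsto u U q := fun U hU ↦
    let ⟨q, hq⟩ := exists_weakTendsto_of_eventually_norm_le U (hU hu)
    ⟨q, hcluster U hU q hq, hq⟩
  obtain ⟨U₀, hU₀⟩ := Ultrafilter.exists_le l
  obtain ⟨p, hpF, hp⟩ := hlim U₀ hU₀
  refine ⟨p, hpF, fun v ↦ (tendsto_iff_ultrafilter _ _ _).mpr fun U hU ↦ ?_⟩
  obtain ⟨q, hqF, hq⟩ := hlim U hU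
  obtain ⟨L, hL⟩ := hconv p hpF q hqF
  have hLp : ⟪p, p - q⟫ = L := tendsto_nhds_unique (hp (p - q)) (hL.mono_left hU₀)
  have hLq : ⟪q, p - q⟫ = L := tendsto_nhds_unique (hq (p - q)) (hL.mono_left hU)
  have hpq : p = q := by
    rw [← sub_eq_zero, ← inner_self_eq_zero (𝕜 := ℝ), inner_sub_left, hLp, hLq, sub_self]
  exact hpq ▸ hq v

lemma exists_isFixedPt_weakTendsto [CompleteSpace H] {l : Filter α} [l.NeBot] {u : α → H}
    {D : Set H} {f : H → H} {β : ℝ} (hDc : IsClosed D) (hDconv : Convex ℝ D)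
    (hf : ∀ x ∈ D, ∀ y ∈ D, ‖f x - f y‖ ≤ ‖x - y‖) (huD : ∀ᶠ a in l, u a ∈ D)
    (hu : ∀ᶠ a in l, ‖u a‖ ≤ β) (hfu : Tendsto (fun a ↦ f (u a) - u a) l (𝓝 0))
    (hconv : ∀ p ∈ D, f p = p → ∀ q ∈ D, f q = q →
      ∃ L, Tendsto (fun a ↦ ⟪u a, p - q⟫) l (𝓝 L)) :
    ∃ p ∈ D, f p = p ∧ WeakTendsto u l p := by
  obtain ⟨p, ⟨hpD, hp⟩, hlim⟩ := exists_weakTendsto_of_tendsto_inner_sub hu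
    (F := {q | q ∈ D ∧ f q = q})
    (fun U hU q hq ↦
      have hqD := hq.mem_of_isClosed_of_convex hDc hDconv (hU huD)
      ⟨hqD, hq.isFixedPt hf hqD (hU huD) (hU hu) (hfu.mono_left hU)⟩)
    (fun p hp q hq ↦ hconv p hp.1 hp.2 q hq.1 hq.2)
  exact ⟨p, hpD, hp, hlim⟩

end Weak

theorem stmt8_general {H : Type*} [NormedAddCommGroup H] [InnerProductSpace ℝ H] [CompleteSpace H]
    (D : Set H) (hD : D.Nonempty) (hDc : IsClosed D) (hDconv : Convex ℝ D)
    (m : ℕ) (hm : 2 ≤ m) (T : ℕ → H → H)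
    (hne : ∀ i ∈ Finset.Icc 1 m, ∀ x ∈ D, ∀ y ∈ D, ‖T i x - T i y‖ ≤ ‖x - y‖)
    (η : ℝ) (hη : η ∈ Set.Ioc (0:ℝ) 1)
    (x : ℝ → ℕ → H)
    (hxD : ∀ ε ∈ Set.Ioo 0 η, ∀ i ≤ m, x ε i ∈ D)
    (hx0 : ∀ ε ∈ Set.Ioo 0 η, x ε 0 = x ε m)
    (hcyc : ∀ ε ∈ Set.Ioo 0 η, ∀ i ∈ Finset.Icc 1 m,
      x ε i = x ε (i - 1) + ε • (T i (x ε (i - 1)) - x ε (i - 1)))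
    (hbdd : ∃ β : ℝ, ∀ ε ∈ Set.Ioo 0 η, ‖x ε m‖ ≤ β)
    (hconv : ∀ p ∈ D, (m:ℝ)⁻¹ • (∑ i ∈ Finset.Icc 1 m, T i p) = p →
      ∀ q ∈ D, (m:ℝ)⁻¹ • (∑ i ∈ Finset.Icc 1 m, T i q) = q →
      ∃ L : ℝ, Tendsto (fun ε => ⟪x ε m, p - q⟫) (𝓝[Set.Ioo 0 η] 0) (𝓝 L)) :
    ∃ xbar ∈ D, (m:ℝ)⁻¹ • (∑ i ∈ Finset.Icc 1 m, T i xbar) = xbar ∧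
      ∀ i ∈ Finset.Icc 1 m, ∀ v : H,
        Tendsto (fun ε => ⟪x ε i, v⟫) (𝓝[Set.Ioo 0 η] 0) (𝓝 ⟪xbar, v⟫) := by
  obtain ⟨hη₀, hη₁⟩ := hη
  obtain ⟨p, hp⟩ := hD
  obtain ⟨β, hβ⟩ := hbdd
  have : (𝓝[Set.Ioo 0 η] (0 : ℝ)).NeBot := left_nhdsWithin_Ioo_neBot hη₀
  have hl : ∀ᶠ ε in 𝓝[Set.Ioo 0 η] 0, ε ∈ Set.Ioo 0 η := self_mem_nhdsWithin
  set C := ∑ j ∈ Finset.Icc 1 m, ‖T j p - p‖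
  have hC : ∀ j ∈ Finset.Icc 1 m, ‖T j p - p‖ ≤ C := fun j hj ↦
    Finset.single_le_sum (f := fun j ↦ ‖T j p - p‖) (fun _ _ ↦ norm_nonneg _) hj
  have hK : ∀ ε ∈ Set.Ioo 0 η, ∀ i ∈ Finset.Icc 1 m,
      ‖T i (x ε (i - 1)) - x ε (i - 1)‖ ≤ 2 * (β + ‖p‖ + m * C) + C := by
    intro ε hε i hi
    have h₀ : ‖x ε 0 - p‖ ≤ β + ‖p‖ := by
      rw [hx0 ε hε]; exact (norm_sub_le _ _).trans (add_le_add (hβ ε hε) le_rfl)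
    have := norm_cycle_displacement_le hne (hxD ε hε) (hcyc ε hε) hε.1.le (hε.2.le.trans hη₁) hp
      hC i hi
    linarith
  have hfix : Tendsto (fun ε ↦ (m : ℝ)⁻¹ • ∑ i ∈ Finset.Icc 1 m, T i (x ε m) - x ε m)
      (𝓝[Set.Ioo 0 η] 0) (𝓝 0) :=
    tendsto_zero_of_norm_le_mul nhdsWithin_le_nhds (hl.mono fun ε hε ↦
      norm_average_cycle_end_sub_le (by omega) hne (hxD ε hε) (hcyc ε hε) (hx0 ε hε) hε.1
        (hK ε hε))
  have hclose : ∀ i ≤ m, Tendsto (fun ε ↦ x ε i - x ε m) (𝓝[Set.Ioo 0 η] 0) (𝓝 0) :=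
    fun i hi ↦ tendsto_zero_of_norm_le_mul nhdsWithin_le_nhds (hl.mono fun ε hε ↦
      norm_sub_rev (x ε i) _ ▸ norm_cycle_end_sub_le (hcyc ε hε) hε.1.le (hK ε hε) i hi)
  obtain ⟨xbar, hxbarD, hxbar, hweak⟩ := exists_isFixedPt_weakTendsto (u := fun ε ↦ x ε m)
    (f := fun z ↦ (m : ℝ)⁻¹ • ∑ i ∈ Finset.Icc 1 m, T i z) hDc hDconv
    (by simpa using norm_average_sub_average_le (Finset.Icc 1 m) hne)
    (hl.mono fun ε hε ↦ hxD ε hε m le_rfl) (hl.mono fun ε hε ↦ hβ ε hε) hfix hconv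
  exact ⟨xbar, hxbarD, hxbar, fun i hi ↦
    hweak.congr_of_tendsto_sub (hclose i (Finset.mem_Icc.mp hi).2)⟩

theorem stmt8 {H : Type*} [NormedAddCommGroup H] [InnerProductSpace ℝ H] [CompleteSpace H]
    (D : Set H) (hD : D.Nonempty) (hDc : IsClosed D) (hDconv : Convex ℝ D)
    (m : ℕ) (hm : 2 ≤ m) (T : ℕ → H → H)
    (hmap : ∀ i ∈ Finset.Icc 1 m, Set.MapsTo (T i) D D)
    (hne : ∀ i ∈ Finset.Icc 1 m, ∀ x ∈ D, ∀ y ∈ D, ‖T i x - T i y‖ ≤ ‖x - y‖)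
    (η : ℝ) (hη : η ∈ Set.Ioc (0:ℝ) 1)
    (x : ℝ → ℕ → H)
    (hxD : ∀ ε ∈ Set.Ioo 0 η, ∀ i ≤ m, x ε i ∈ D)
    (hx0 : ∀ ε ∈ Set.Ioo 0 η, x ε 0 = x ε m)
    (hcyc : ∀ ε ∈ Set.Ioo 0 η, ∀ i ∈ Finset.Icc 1 m,
      x ε i = x ε (i - 1) + ε • (T i (x ε (i - 1)) - x ε (i - 1)))
    (hbdd : ∃ β : ℝ, ∀ ε ∈ Set.Ioo 0 η, ‖x ε m‖ ≤ β)
    (hconv : ∀ p ∈ D, (m:ℝ)⁻¹ • (∑ i ∈ Finset.Icc 1 m, T i p) = p →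
      ∀ q ∈ D, (m:ℝ)⁻¹ • (∑ i ∈ Finset.Icc 1 m, T i q) = q →
      ∃ L : ℝ, Tendsto (fun ε => ⟪x ε m, p - q⟫) (𝓝[Set.Ioo 0 η] 0) (𝓝 L)) :
    ∃ xbar ∈ D, (m:ℝ)⁻¹ • (∑ i ∈ Finset.Icc 1 m, T i xbar) = xbar ∧
      ∀ i ∈ Finset.Icc 1 m, ∀ v : H,
        Tendsto (fun ε => ⟪x ε i, v⟫) (𝓝[Set.Ioo 0 η] 0) (𝓝 ⟪xbar, v⟫) :=
  stmt8_general D hD hDc hDconv m hm T hne η hη x hxD hx0 hcyc hbdd hconv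
end

section
/- Under the hypotheses of the previous statement, if Fix T is a singleton {x̄}, then x_i^ε ⇀ x̄ weakly as ε → 0 for every i = 1,...,m. -/
open Filter Topology
open scoped RealInnerProductSpace

set_option maxHeartbeats 2000000 in
theorem stmt9 {H : Type*} [NormedAddCommGroup H] [InnerProductSpace ℝ H] [CompleteSpace H]
    (D : Set H) (hD : D.Nonempty) (hDc : IsClosed D) (hDconv : Convex ℝ D)
    (m : ℕ) (hm : 2 ≤ m) (T : ℕ → H → H)
    (hmap : ∀ i ∈ Finset.Icc 1 m, Set.MapsTo (T i) D D)
    (hne : ∀ i ∈ Finset.Icc 1 m, ∀ x ∈ D, ∀ y ∈ D, ‖T i x - T i y‖ ≤ ‖x - y‖)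
    (η : ℝ) (hη : η ∈ Set.Ioc (0:ℝ) 1)
    (x : ℝ → ℕ → H)
    (hxD : ∀ ε ∈ Set.Ioo 0 η, ∀ i ≤ m, x ε i ∈ D)
    (hx0 : ∀ ε ∈ Set.Ioo 0 η, x ε 0 = x ε m)
    (hcyc : ∀ ε ∈ Set.Ioo 0 η, ∀ i ∈ Finset.Icc 1 m,
      x ε i = x ε (i - 1) + ε • (T i (x ε (i - 1)) - x ε (i - 1)))
    (hbdd : ∃ β : ℝ, ∀ ε ∈ Set.Ioo 0 η, ‖x ε m‖ ≤ β)
    (xbar : H) (hxbarD : xbar ∈ D)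
    (hxbar : (m:ℝ)⁻¹ • (∑ i ∈ Finset.Icc 1 m, T i xbar) = xbar)
    (huniq : ∀ p ∈ D, (m:ℝ)⁻¹ • (∑ i ∈ Finset.Icc 1 m, T i p) = p → p = xbar) :
    ∀ i ∈ Finset.Icc 1 m, ∀ v : H,
      Tendsto (fun ε => ⟪x ε i, v⟫) (𝓝[Set.Ioo 0 η] 0) (𝓝 ⟪xbar, v⟫) := by
  obtain ⟨β, hβ⟩ := hbdd
  obtain ⟨hη0, hη1⟩ := hη
  set β0 : ℝ := max β 0 with hβ0def
  have hβ0 : (0:ℝ) ≤ β0 := le_max_right _ _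
  set CT : ℝ := ∑ i ∈ Finset.Icc 1 m, ‖T i xbar‖ with hCTdef
  have hCT0 : (0:ℝ) ≤ CT := Finset.sum_nonneg fun i _ => norm_nonneg _
  set K : ℝ := ‖xbar‖ + CT with hKdef
  have hK0 : (0:ℝ) ≤ K := add_nonneg (norm_nonneg _) hCT0
  set B : ℝ := β0 + m * K with hBdef
  have hB0 : (0:ℝ) ≤ B := add_nonneg hβ0 (mul_nonneg (Nat.cast_nonneg _) hK0)
  set C1 : ℝ := 2 * B + ‖xbar‖ + CT with hC1def
  have hC10 : (0:ℝ) ≤ C1 := by positivity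
  set C2 : ℝ := 2 * m * C1 with hC2def
  have hC20 : (0:ℝ) ≤ C2 := by positivity
  have hmpos : (0:ℝ) < m := by exact_mod_cast Nat.lt_of_lt_of_le Nat.zero_lt_two hm
  -- bound on ‖T i y‖ for y ∈ D
  have hTb : ∀ i ∈ Finset.Icc 1 m, ∀ y ∈ D, ‖T i y‖ ≤ ‖y‖ + K := by
    intro i hi y hy
    have h1 : ‖T i y - T i xbar‖ ≤ ‖y - xbar‖ := hne i hi y hy xbar hxbarD
    have h2 : ‖T i xbar‖ ≤ CT :=
      Finset.single_le_sum (fun j _ => norm_nonneg (T j xbar)) hi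
    calc ‖T i y‖ ≤ ‖T i y - T i xbar‖ + ‖T i xbar‖ := by
          have := norm_add_le (T i y - T i xbar) (T i xbar); simpa using this
      _ ≤ ‖y - xbar‖ + CT := add_le_add h1 h2
      _ ≤ (‖y‖ + ‖xbar‖) + CT := by gcongr; exact norm_sub_le _ _
      _ = ‖y‖ + K := by rw [hKdef]; ring
  -- uniform bound on cycle points
  have hnormb : ∀ ε ∈ Set.Ioo 0 η, ∀ i, i ≤ m → ‖x ε i‖ ≤ β0 + i * K := by
    intro ε hε i
    induction i with
    | zero =>
      intro _
      rw [hx0 ε hε]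
      push_cast
      have h := le_trans (hβ ε hε) (le_max_left β 0)
      rw [hβ0def]
      linarith
    | succ n ih =>
      intro hnm
      have hn : n ≤ m := Nat.le_of_succ_le hnm
      have hmem : n + 1 ∈ Finset.Icc 1 m := Finset.mem_Icc.mpr ⟨Nat.succ_le_succ (Nat.zero_le _), hnm⟩
      have hrec := hcyc ε hε (n+1) hmem
      simp only [Nat.add_sub_cancel] at hrec
      have hxnD : x ε n ∈ D := hxD ε hε n hn
      have hTn : ‖T (n+1) (x ε n)‖ ≤ ‖x ε n‖ + K := hTb (n+1) hmem (x ε n) hxnD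
      have hcomb : x ε (n+1) = (1 - ε) • x ε n + ε • T (n+1) (x ε n) := by
        rw [hrec]; module
      have hε0 : 0 ≤ ε := le_of_lt hε.1
      have hε1 : ε ≤ 1 := le_trans (le_of_lt hε.2) hη1
      calc ‖x ε (n+1)‖ ≤ ‖(1-ε) • x ε n‖ + ‖ε • T (n+1) (x ε n)‖ := by
            rw [hcomb]; exact norm_add_le _ _
        _ = (1-ε) * ‖x ε n‖ + ε * ‖T (n+1) (x ε n)‖ := by
            rw [norm_smul, norm_smul, Real.norm_eq_abs, Real.norm_eq_abs,
              abs_of_nonneg (by linarith : (0:ℝ) ≤ 1 - ε), abs_of_nonneg hε0]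
        _ ≤ (1-ε) * ‖x ε n‖ + ε * (‖x ε n‖ + K) := by gcongr
        _ = ‖x ε n‖ + ε * K := by ring
        _ ≤ (β0 + n * K) + 1 * K := by gcongr; exact ih hn
        _ = β0 + (n+1 : ℕ) * K := by push_cast; ring
  have hBb : ∀ ε ∈ Set.Ioo 0 η, ∀ i, i ≤ m → ‖x ε i‖ ≤ B := by
    intro ε hε i hi
    refine le_trans (hnormb ε hε i hi) ?_
    have hi' : (i:ℝ) ≤ m := by exact_mod_cast hi
    rw [hBdef]
    nlinarith
  -- consecutive difference bound
  have hdiff : ∀ ε ∈ Set.Ioo 0 η, ∀ i ∈ Finset.Icc 1 m, ‖x ε i - x ε (i-1)‖ ≤ ε * C1 := by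
    intro ε hε i hi
    obtain ⟨hi1, him⟩ := Finset.mem_Icc.mp hi
    have hi1m : i - 1 ≤ m := le_trans (Nat.sub_le _ _) him
    have hxD' : x ε (i-1) ∈ D := hxD ε hε (i-1) hi1m
    have hrec := hcyc ε hε i hi
    have : x ε i - x ε (i-1) = ε • (T i (x ε (i-1)) - x ε (i-1)) := by
      rw [hrec]; abel
    rw [this, norm_smul, Real.norm_eq_abs, abs_of_nonneg (le_of_lt hε.1)]
    refine mul_le_mul_of_nonneg_left ?_ (le_of_lt hε.1)
    calc ‖T i (x ε (i-1)) - x ε (i-1)‖ ≤ ‖T i (x ε (i-1))‖ + ‖x ε (i-1)‖ := norm_sub_le _ _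
      _ ≤ (‖x ε (i-1)‖ + K) + ‖x ε (i-1)‖ := by gcongr; exact hTb i hi _ hxD'
      _ ≤ (B + K) + B := by gcongr <;> exact hBb ε hε _ hi1m
      _ = C1 := by rw [hC1def, hKdef]; ring
  -- distance from x ε 0
  have hdist0 : ∀ ε ∈ Set.Ioo 0 η, ∀ i, i ≤ m → ‖x ε i - x ε 0‖ ≤ ε * (i * C1) := by
    intro ε hε i
    induction i with
    | zero => intro _; simp
    | succ n ih =>
      intro hnm
      have hn : n ≤ m := Nat.le_of_succ_le hnm
      have hmem : n + 1 ∈ Finset.Icc 1 m := Finset.mem_Icc.mpr ⟨Nat.succ_le_succ (Nat.zero_le _), hnm⟩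
      have h1 := hdiff ε hε (n+1) hmem
      simp only [Nat.add_sub_cancel] at h1
      calc ‖x ε (n+1) - x ε 0‖ = ‖(x ε (n+1) - x ε n) + (x ε n - x ε 0)‖ := by abel_nf
      _ ≤ ‖x ε (n+1) - x ε n‖ + ‖x ε n - x ε 0‖ := norm_add_le _ _
      _ ≤ ε * C1 + ε * (n * C1) := add_le_add h1 (ih hn)
      _ = ε * ((n+1:ℕ) * C1) := by push_cast; ring
  have hdist0' : ∀ ε ∈ Set.Ioo 0 η, ∀ i, i ≤ m → ‖x ε i - x ε 0‖ ≤ ε * (m * C1) := by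
    intro ε hε i hi
    refine le_trans (hdist0 ε hε i hi) ?_
    have : (i:ℝ) ≤ m := by exact_mod_cast hi
    have hε0 : 0 ≤ ε := le_of_lt hε.1
    exact mul_le_mul_of_nonneg_left (mul_le_mul_of_nonneg_right this hC10) hε0
  -- sum identity
  have hsumzero : ∀ ε ∈ Set.Ioo 0 η,
      ∑ i ∈ Finset.Icc 1 m, (T i (x ε (i-1)) - x ε (i-1)) = 0 := by
    intro ε hε
    have htel : ∀ n, n ≤ m →
        x ε n - x ε 0 = ε • ∑ i ∈ Finset.Icc 1 n, (T i (x ε (i-1)) - x ε (i-1)) := by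
      intro n
      induction n with
      | zero => intro _; simp
      | succ k ih =>
        intro hkm
        have hk : k ≤ m := Nat.le_of_succ_le hkm
        have hmem : k + 1 ∈ Finset.Icc 1 m := Finset.mem_Icc.mpr ⟨Nat.succ_le_succ (Nat.zero_le _), hkm⟩
        have hrec := hcyc ε hε (k+1) hmem
        simp only [Nat.add_sub_cancel] at hrec
        rw [Finset.sum_Icc_succ_top (Nat.succ_le_succ (Nat.zero_le k)), smul_add,
          ← ih hk]
        simp only [Nat.add_sub_cancel]
        rw [hrec]; abel
    have h := htel m (le_refl m)
    rw [← hx0 ε hε, sub_self] at h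
    have hεne : ε ≠ 0 := ne_of_gt hε.1
    rcases smul_eq_zero.mp h.symm with h' | h'
    · exact absurd h' hεne
    · exact h'
  -- approximate fixed point property of the average at x ε 0
  have hafp : ∀ ε ∈ Set.Ioo 0 η,
      ‖(m:ℝ)⁻¹ • (∑ i ∈ Finset.Icc 1 m, T i (x ε 0)) - x ε 0‖ ≤ ε * C2 := by
    intro ε hε
    set a := x ε 0 with hadef
    have key : (m:ℝ)⁻¹ • (∑ i ∈ Finset.Icc 1 m, T i a) - a
        = (m:ℝ)⁻¹ • ∑ i ∈ Finset.Icc 1 m, ((T i a - T i (x ε (i-1))) + (x ε (i-1) - a)) := by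
      have hs : ∑ i ∈ Finset.Icc 1 m, ((T i a - T i (x ε (i-1))) + (x ε (i-1) - a))
          = ∑ i ∈ Finset.Icc 1 m, (T i a - a) := by
        have : ∀ i ∈ Finset.Icc 1 m, (T i a - T i (x ε (i-1))) + (x ε (i-1) - a)
            = (T i a - a) - (T i (x ε (i-1)) - x ε (i-1)) := by intro i _; abel
        rw [Finset.sum_congr rfl this, Finset.sum_sub_distrib, hsumzero ε hε, sub_zero]
      rw [hs, Finset.sum_sub_distrib, Finset.sum_const, Nat.card_Icc]
      simp only [Nat.add_sub_cancel]
      rw [smul_sub, ← Nat.cast_smul_eq_nsmul ℝ m a, smul_smul,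
        inv_mul_cancel₀ (ne_of_gt hmpos), one_smul]
    rw [key]
    have hbound : ∀ i ∈ Finset.Icc 1 m,
        ‖(T i a - T i (x ε (i-1))) + (x ε (i-1) - a)‖ ≤ 2 * (ε * (m * C1)) := by
      intro i hi
      obtain ⟨hi1, him⟩ := Finset.mem_Icc.mp hi
      have hi1m : i - 1 ≤ m := le_trans (Nat.sub_le _ _) him
      have h1 : ‖T i a - T i (x ε (i-1))‖ ≤ ‖a - x ε (i-1)‖ :=
        hne i hi a (hxD ε hε 0 (Nat.zero_le m)) _ (hxD ε hε _ hi1m)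
      have h2 : ‖x ε (i-1) - a‖ ≤ ε * (m * C1) := hdist0' ε hε _ hi1m
      have h3 : ‖a - x ε (i-1)‖ = ‖x ε (i-1) - a‖ := norm_sub_rev _ _
      calc ‖(T i a - T i (x ε (i-1))) + (x ε (i-1) - a)‖
          ≤ ‖T i a - T i (x ε (i-1))‖ + ‖x ε (i-1) - a‖ := norm_add_le _ _
        _ ≤ ε * (m * C1) + ε * (m * C1) := by
            refine add_le_add (le_trans h1 ?_) h2; rw [h3]; exact h2
        _ = 2 * (ε * (m * C1)) := by ring
    calc ‖(m:ℝ)⁻¹ • ∑ i ∈ Finset.Icc 1 m, ((T i a - T i (x ε (i-1))) + (x ε (i-1) - a))‖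
        = (m:ℝ)⁻¹ * ‖∑ i ∈ Finset.Icc 1 m, ((T i a - T i (x ε (i-1))) + (x ε (i-1) - a))‖ := by
          rw [norm_smul, Real.norm_eq_abs, abs_of_nonneg (le_of_lt (inv_pos.mpr hmpos))]
      _ ≤ (m:ℝ)⁻¹ * ∑ i ∈ Finset.Icc 1 m, (2 * (ε * (m * C1))) := by
          gcongr
          exact le_trans (norm_sum_le _ _) (Finset.sum_le_sum hbound)
      _ = (m:ℝ)⁻¹ * (m * (2 * (ε * (m * C1)))) := by
          rw [Finset.sum_const, Nat.card_Icc]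
          simp only [Nat.add_sub_cancel, nsmul_eq_mul]
      _ = ε * C2 := by
          rw [hC2def]
          field_simp
  -- nonexpansiveness of the average
  have hSne : ∀ p ∈ D, ∀ q ∈ D,
      ‖(m:ℝ)⁻¹ • (∑ i ∈ Finset.Icc 1 m, T i p) - (m:ℝ)⁻¹ • (∑ i ∈ Finset.Icc 1 m, T i q)‖
        ≤ ‖p - q‖ := by
    intro p hp q hq
    rw [← smul_sub, ← Finset.sum_sub_distrib, norm_smul, Real.norm_eq_abs,
      abs_of_nonneg (le_of_lt (inv_pos.mpr hmpos))]
    calc (m:ℝ)⁻¹ * ‖∑ i ∈ Finset.Icc 1 m, (T i p - T i q)‖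
        ≤ (m:ℝ)⁻¹ * ∑ i ∈ Finset.Icc 1 m, ‖p - q‖ := by
          gcongr
          exact le_trans (norm_sum_le _ _) (Finset.sum_le_sum fun i hi => hne i hi p hp q hq)
      _ = ‖p - q‖ := by
          rw [Finset.sum_const, Nat.card_Icc]
          simp only [Nat.add_sub_cancel, nsmul_eq_mul]
          rw [← mul_assoc, inv_mul_cancel₀ (ne_of_gt hmpos), one_mul]
  -- the ultrafilter argument
  have key : ∀ (U : Ultrafilter ℝ), ↑U ≤ 𝓝[Set.Ioo 0 η] (0:ℝ) →
      ∀ v : H, Tendsto (fun ε => ⟪x ε 0, v⟫) ↑U (𝓝 ⟪xbar, v⟫) := by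
    intro U hU
    have hmem : ∀ᶠ ε in ↑U, ε ∈ Set.Ioo 0 η := hU self_mem_nhdsWithin
    have hεtend : Tendsto (fun ε : ℝ => ε) ↑U (𝓝 0) := hU.trans nhdsWithin_le_nhds
    -- existence of limits of inner products
    have hex : ∀ v : H, ∃ r : ℝ, Tendsto (fun ε => ⟪x ε 0, v⟫) ↑U (𝓝 r) := by
      intro v
      have hb : ∀ᶠ ε in ↑U, ⟪x ε 0, v⟫ ∈ Set.Icc (-(B * ‖v‖)) (B * ‖v‖) := by
        refine hmem.mono fun ε hε => ?_
        have h1 : |⟪x ε 0, v⟫| ≤ ‖x ε 0‖ * ‖v‖ := abs_real_inner_le_norm _ _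
        have h2 : ‖x ε 0‖ * ‖v‖ ≤ B * ‖v‖ := by
          gcongr
          exact hBb ε hε 0 (Nat.zero_le m)
        exact abs_le.mp (le_trans h1 h2)
      have hle : (Ultrafilter.map (fun ε => ⟪x ε 0, v⟫) U : Filter ℝ)
          ≤ Filter.principal (Set.Icc (-(B * ‖v‖)) (B * ‖v‖)) := by
        rw [Ultrafilter.coe_map, Filter.le_principal_iff, Filter.mem_map]
        exact hb
      obtain ⟨r, _, hr⟩ := isCompact_Icc.ultrafilter_le_nhds
        (Ultrafilter.map (fun ε => ⟪x ε 0, v⟫) U) hle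
      exact ⟨r, by rwa [Ultrafilter.coe_map] at hr⟩
    choose φ hφ using hex
    have hadd : ∀ v w, φ (v + w) = φ v + φ w := by
      intro v w
      refine tendsto_nhds_unique (hφ (v + w)) ?_
      have := (hφ v).add (hφ w)
      simpa [inner_add_right] using this
    have hsmul : ∀ (c : ℝ) v, φ (c • v) = c * φ v := by
      intro c v
      refine tendsto_nhds_unique (hφ (c • v)) ?_
      have := (hφ v).const_mul c
      simpa [real_inner_smul_right] using this
    have hφbound : ∀ v, |φ v| ≤ B * ‖v‖ := by
      intro v
      refine le_of_tendsto (hφ v).abs (hmem.mono fun ε hε => ?_)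
      have h1 : |⟪x ε 0, v⟫| ≤ ‖x ε 0‖ * ‖v‖ := abs_real_inner_le_norm _ _
      have h2 : ‖x ε 0‖ * ‖v‖ ≤ B * ‖v‖ := by
        gcongr; exact hBb ε hε 0 (Nat.zero_le m)
      exact le_trans h1 h2
    set L : H →ₗ[ℝ] ℝ :=
      { toFun := φ, map_add' := hadd, map_smul' := hsmul } with hLdef
    set Lc : H →L[ℝ] ℝ := L.mkContinuous B (fun v => by
      rw [Real.norm_eq_abs]; exact hφbound v) with hLcdef
    set z : H := (InnerProductSpace.toDual ℝ H).symm Lc with hzdef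
    have hz : ∀ v, ⟪z, v⟫ = φ v := by
      intro v
      rw [hzdef]
      exact InnerProductSpace.toDual_symm_apply
    have hzt : ∀ v, Tendsto (fun ε => ⟪x ε 0, v⟫) ↑U (𝓝 ⟪z, v⟫) := by
      intro v; rw [hz v]; exact hφ v
    -- z ∈ D
    have hzD : z ∈ D := by
      by_contra hzD
      obtain ⟨F, u, hFs, hFz⟩ := geometric_hahn_banach_closed_point hDconv hDc hzD
      set w : H := (InnerProductSpace.toDual ℝ H).symm F with hwdef
      have hw : ∀ y : H, F y = ⟪w, y⟫ := by
        intro y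
        rw [hwdef, InnerProductSpace.toDual_symm_apply]
      have htF : Tendsto (fun ε => F (x ε 0)) ↑U (𝓝 (F z)) := by
        have h1 : Tendsto (fun ε => ⟪x ε 0, w⟫) ↑U (𝓝 ⟪z, w⟫) := hzt w
        have h2 : ∀ ε : ℝ, F (x ε 0) = ⟪x ε 0, w⟫ := fun ε => by
          rw [hw, real_inner_comm]
        have h3 : F z = ⟪z, w⟫ := by rw [hw, real_inner_comm]
        simp only [h2, h3]
        exact h1
      have h1 : F z ≤ u :=
        le_of_tendsto htF (hmem.mono fun ε hε => le_of_lt (hFs _ (hxD ε hε 0 (Nat.zero_le m))))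
      exact absurd h1 (not_le.mpr hFz)
    -- z is a fixed point of the average
    have hzfix : (m:ℝ)⁻¹ • (∑ i ∈ Finset.Icc 1 m, T i z) = z := by
      set Sz : H := (m:ℝ)⁻¹ • (∑ i ∈ Finset.Icc 1 m, T i z) with hSzdef
      have hptwise : ∀ ε ∈ Set.Ioo 0 η,
          ‖z - Sz‖^2 ≤ (ε*C2)^2 + 2*(ε*C2)*(B + ‖z‖) - 2 * ⟪x ε 0 - z, z - Sz⟫ := by
        intro ε hε
        set a := x ε 0 with hadef
        set Sa : H := (m:ℝ)⁻¹ • (∑ i ∈ Finset.Icc 1 m, T i a) with hSadef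
        have hd : ‖Sa - a‖ ≤ ε * C2 := hafp ε hε
        have hd0 : (0:ℝ) ≤ ‖Sa - a‖ := norm_nonneg _
        have haz : ‖a - z‖ ≤ B + ‖z‖ := by
          calc ‖a - z‖ ≤ ‖a‖ + ‖z‖ := norm_sub_le _ _
            _ ≤ B + ‖z‖ := by gcongr; exact hBb ε hε 0 (Nat.zero_le m)
        have haz0 : (0:ℝ) ≤ ‖a - z‖ := norm_nonneg _
        have hne' : ‖Sa - Sz‖ ≤ ‖a - z‖ := hSne a (hxD ε hε 0 (Nat.zero_le m)) z hzD
        have htri : ‖a - Sz‖ ≤ ‖Sa - a‖ + ‖a - z‖ := by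
          calc ‖a - Sz‖ ≤ ‖a - Sa‖ + ‖Sa - Sz‖ := by
                have : a - Sz = (a - Sa) + (Sa - Sz) := by abel
                rw [this]; exact norm_add_le _ _
            _ ≤ ‖Sa - a‖ + ‖a - z‖ := by rw [norm_sub_rev a Sa]; gcongr
        have hexp : ‖a - Sz‖^2 = ‖a - z‖^2 + 2 * ⟪a - z, z - Sz⟫ + ‖z - Sz‖^2 := by
          have : a - Sz = (a - z) + (z - Sz) := by abel
          rw [this, norm_add_sq_real]
        have hsq0 : (0:ℝ) ≤ ‖a - Sz‖ := norm_nonneg _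
        nlinarith [sq_nonneg (‖Sa - a‖ + ‖a - z‖)]
      have hRHS : Tendsto (fun ε => (ε*C2)^2 + 2*(ε*C2)*(B + ‖z‖) - 2 * ⟪x ε 0 - z, z - Sz⟫)
          ↑U (𝓝 0) := by
        have h1 : Tendsto (fun ε : ℝ => ε * C2) ↑U (𝓝 0) := by
          simpa using hεtend.mul_const C2
        have h2 : Tendsto (fun ε => ⟪x ε 0 - z, z - Sz⟫) ↑U (𝓝 0) := by
          have h3 : ∀ ε : ℝ, ⟪x ε 0 - z, z - Sz⟫ = ⟪x ε 0, z - Sz⟫ - ⟪z, z - Sz⟫ := by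
            intro ε; rw [inner_sub_left]
          simp only [h3]
          have := (hzt (z - Sz)).sub (tendsto_const_nhds (x := ⟪z, z - Sz⟫))
          simpa using this
        have := ((h1.pow 2).add ((h1.mul_const (B + ‖z‖)).const_mul 2)).sub (h2.const_mul 2)
        simpa using this.congr (fun ε => by ring)
      have hle0 : ‖z - Sz‖^2 ≤ 0 := ge_of_tendsto hRHS (hmem.mono hptwise)
      have : ‖z - Sz‖ = 0 := by nlinarith [norm_nonneg (z - Sz), sq_nonneg ‖z - Sz‖]
      have : z - Sz = 0 := norm_eq_zero.mp this
      rw [hSzdef] at *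
      linear_combination (norm := abel) -this
    have hzx : z = xbar := huniq z hzD hzfix
    intro v
    rw [← hzx]
    exact hzt v
  -- conclusion
  intro i hi v
  have him : i ≤ m := (Finset.mem_Icc.mp hi).2
  have h0 : Tendsto (fun ε => ⟪x ε 0, v⟫) (𝓝[Set.Ioo 0 η] 0) (𝓝 ⟪xbar, v⟫) :=
    (tendsto_iff_ultrafilter _ _ _).mpr fun U hU => key U hU v
  have hd : Tendsto (fun ε => ⟪x ε i - x ε 0, v⟫) (𝓝[Set.Ioo 0 η] 0) (𝓝 0) := by
    refine squeeze_zero_norm' (a := fun ε => (ε * (m * C1)) * ‖v‖) ?_ ?_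
    · refine eventually_nhdsWithin_of_forall fun ε hε => ?_
      calc ‖⟪x ε i - x ε 0, v⟫‖ = |⟪x ε i - x ε 0, v⟫| := Real.norm_eq_abs _
        _ ≤ ‖x ε i - x ε 0‖ * ‖v‖ := abs_real_inner_le_norm _ _
        _ ≤ (ε * (m * C1)) * ‖v‖ := by gcongr; exact hdist0' ε hε i him
    · have : Tendsto (fun ε : ℝ => ε) (𝓝[Set.Ioo 0 η] 0) (𝓝 0) := nhdsWithin_le_nhds
      simpa using (this.mul_const (m * C1)).mul_const ‖v‖
  have heq : ∀ ε : ℝ, ⟪x ε i, v⟫ = ⟪x ε 0, v⟫ + ⟪x ε i - x ε 0, v⟫ := by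
    intro ε
    rw [inner_sub_left]; ring
  simp only [heq]
  simpa using h0.add hd
end

section
/- Let H be a real Hilbert space, T_1,...,T_m nonexpansive self-maps of H with ⋂ Fix T_i ≠ ∅. Then for every ε ∈ (0,1), Fix R^ε = ⋂_{i=1}^m Fix((1−ε)Id + εT_i) = ⋂_{i=1}^m Fix T_i = Fix((1/m)∑ T_i). -/
open Filter Topology

lemma key_ineq {H : Type*} [NormedAddCommGroup H] [InnerProductSpace ℝ H]
    {T : H → H} (hT : LipschitzWith 1 T) {z : H} (hz : T z = z)
    (x : H) : ‖T x - x‖^2 + 2 * inner (𝕜 := ℝ) (T x - x) (x - z) ≤ 0 := by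
  have h1 : ‖T x - z‖ ≤ ‖x - z‖ := by
    have := hT.dist_le_mul x z
    simpa [hz, dist_eq_norm] using this
  have h2 : ‖(T x - x) + (x - z)‖^2 ≤ ‖x - z‖^2 := by
    have : (T x - x) + (x - z) = T x - z := by abel
    rw [this]
    exact pow_le_pow_left₀ (norm_nonneg _) h1 2
  rw [norm_add_sq_real] at h2
  linarith

lemma step_ineq {H : Type*} [NormedAddCommGroup H] [InnerProductSpace ℝ H]
    {T : H → H} (hT : LipschitzWith 1 T) {z : H} (hz : T z = z)
    {ε : ℝ} (hε : ε ∈ Set.Ioo (0:ℝ) 1) (x : H) :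
    ‖(x + ε • (T x - x)) - z‖^2 ≤ ‖x - z‖^2 - ((1-ε)/ε) * ‖(x + ε • (T x - x)) - x‖^2 := by
  obtain ⟨hε0, hε1⟩ := hε
  have key := key_ineq hT hz x
  set u := T x - x with hu
  set v := x - z with hv
  have e1 : (x + ε • u) - z = ε • u + v := by rw [hu, hv]; abel
  have e2 : (x + ε • u) - x = ε • u := by abel
  rw [e1, e2, norm_add_sq_real, real_inner_smul_left, norm_smul, Real.norm_eq_abs,
    abs_of_pos hε0, mul_pow]
  have hnn : 0 ≤ ‖u‖^2 := sq_nonneg _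
  have hmu : ε * (‖u‖^2 + 2 * inner (𝕜 := ℝ) u v) ≤ 0 :=
    mul_nonpos_of_nonneg_of_nonpos hε0.le key
  have hd : ‖v‖^2 - (1-ε)/ε * (ε^2*‖u‖^2) = ‖v‖^2 - (1-ε)*ε*‖u‖^2 := by
    field_simp
  rw [hd]
  nlinarith

lemma relaxComp_succ_s13 {H : Type*} [NormedAddCommGroup H] [Module ℝ H]
    (k : ℕ) (T : ℕ → H → H) (ε : ℝ) (y : H) :
    relaxComp (k+1) T ε y =
      relaxComp k T ε y + ε • (T (k+1) (relaxComp k T ε y) - relaxComp k T ε y) := by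
  simp [relaxComp, List.range_succ]

theorem stmt13 {H : Type*} [NormedAddCommGroup H] [InnerProductSpace ℝ H] [CompleteSpace H]
    (m : ℕ) (hm : 2 ≤ m) (T : ℕ → H → H)
    (hne : ∀ i ∈ Finset.Icc 1 m, LipschitzWith 1 (T i))
    (hcommon : ∃ x : H, ∀ i ∈ Finset.Icc 1 m, T i x = x) :
    ∀ ε ∈ Set.Ioo (0:ℝ) 1,
      {x | relaxComp m T ε x = x}
        = (⋂ i ∈ Finset.Icc 1 m, {x : H | (1 - ε) • x + ε • T i x = x}) ∧
      (⋂ i ∈ Finset.Icc 1 m, {x : H | (1 - ε) • x + ε • T i x = x})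
        = (⋂ i ∈ Finset.Icc 1 m, {x : H | T i x = x}) ∧
      (⋂ i ∈ Finset.Icc 1 m, {x : H | T i x = x})
        = {x | (m:ℝ)⁻¹ • (∑ i ∈ Finset.Icc 1 m, T i x) = x} := by
  obtain ⟨z, hz⟩ := hcommon
  intro ε hε
  obtain ⟨hε0, hε1⟩ := hε
  have hm0 : (m:ℝ) ≠ 0 := Nat.cast_ne_zero.mpr (by omega)
  -- equivalence of relaxed fixed point and fixed point
  have hiff : ∀ (i : ℕ) (x : H), ((1 - ε) • x + ε • T i x = x ↔ T i x = x) := by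
    intro i x
    constructor
    · intro h
      have h0 : ε • (T i x - x) = 0 := by
        have e : (1 - ε) • x + ε • T i x - x = ε • (T i x - x) := by
          rw [sub_smul, one_smul, smul_sub]; abel
        rw [← e, h, sub_self]
      rcases smul_eq_zero.mp h0 with h1 | h1
      · exact absurd h1 (ne_of_gt hε0)
      · exact sub_eq_zero.mp h1
    · intro h
      rw [h, ← add_smul]
      simp
  refine ⟨?_, ?_, ?_⟩
  · -- Fix relaxComp = ⋂ relaxed fixed sets
    ext x
    simp only [Set.mem_setOf_eq, Set.mem_iInter]
    constructor
    · intro h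
      -- decreasing estimate
      have decr : ∀ n, n ≤ m →
          ‖relaxComp n T ε x - z‖^2 + ((1-ε)/ε) *
            ∑ k ∈ Finset.range n, ‖relaxComp (k+1) T ε x - relaxComp k T ε x‖^2
          ≤ ‖x - z‖^2 := by
        intro n
        induction n with
        | zero => simp [relaxComp]
        | succ n ih =>
          intro hn
          have hn' : n ≤ m := Nat.le_of_succ_le hn
          have hmem : n + 1 ∈ Finset.Icc 1 m := Finset.mem_Icc.mpr ⟨Nat.succ_le_succ (Nat.zero_le n), hn⟩
          have hstep := step_ineq (hne _ hmem) (hz _ hmem) ⟨hε0, hε1⟩ (relaxComp n T ε x)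
          rw [← relaxComp_succ_s13] at hstep
          rw [Finset.sum_range_succ, mul_add]
          have ihn := ih hn'
          linarith
      have hfinal := decr m le_rfl
      rw [h] at hfinal
      have hc : 0 < (1-ε)/ε := div_pos (by linarith) hε0
      have hnn : ∀ k ∈ Finset.range m, (0:ℝ) ≤ ‖relaxComp (k+1) T ε x - relaxComp k T ε x‖^2 :=
        fun _ _ => sq_nonneg _
      have hsum0 : ∑ k ∈ Finset.range m, ‖relaxComp (k+1) T ε x - relaxComp k T ε x‖^2 = 0 := by
        have h1 : 0 ≤ ∑ k ∈ Finset.range m, ‖relaxComp (k+1) T ε x - relaxComp k T ε x‖^2 :=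
          Finset.sum_nonneg hnn
        nlinarith
      have hzero : ∀ k ∈ Finset.range m, relaxComp (k+1) T ε x = relaxComp k T ε x := by
        intro k hk
        have := (Finset.sum_eq_zero_iff_of_nonneg hnn).mp hsum0 k hk
        have := sq_eq_zero_iff.mp this
        rw [norm_eq_zero, sub_eq_zero] at this
        exact this
      have hfix : ∀ k, k ≤ m → relaxComp k T ε x = x := by
        intro k
        induction k with
        | zero => simp [relaxComp]
        | succ n ih =>
          intro hn
          rw [hzero n (Finset.mem_range.mpr hn)]
          exact ih (Nat.le_of_succ_le hn)
      intro i hi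
      obtain ⟨hi1, hi2⟩ := Finset.mem_Icc.mp hi
      obtain ⟨k, rfl⟩ : ∃ k, i = k + 1 := ⟨i - 1, by omega⟩
      have hk : k < m := by omega
      have h1 := hzero k (Finset.mem_range.mpr hk)
      rw [relaxComp_succ_s13, hfix k (le_of_lt hk)] at h1
      have h2 : ε • (T (k+1) x - x) = 0 := add_eq_left.mp h1
      rcases smul_eq_zero.mp h2 with h3 | h3
      · exact absurd h3 (ne_of_gt hε0)
      · exact (hiff (k+1) x).mpr (sub_eq_zero.mp h3)
    · intro h
      have hTx : ∀ i ∈ Finset.Icc 1 m, T i x = x := fun i hi => (hiff i x).mp (h i hi)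
      have hfix : ∀ k, k ≤ m → relaxComp k T ε x = x := by
        intro k
        induction k with
        | zero => simp [relaxComp]
        | succ n ih =>
          intro hn
          have hmem : n + 1 ∈ Finset.Icc 1 m :=
            Finset.mem_Icc.mpr ⟨Nat.succ_le_succ (Nat.zero_le n), hn⟩
          rw [relaxComp_succ_s13, ih (Nat.le_of_succ_le hn), hTx _ hmem]
          simp
      exact hfix m le_rfl
  · -- relaxed fixed sets = fixed sets
    ext x
    simp only [Set.mem_iInter, Set.mem_setOf_eq]
    exact ⟨fun h i hi => (hiff i x).mp (h i hi), fun h i hi => (hiff i x).mpr (h i hi)⟩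
  · -- ⋂ Fix T i = Fix of the average
    ext x
    simp only [Set.mem_iInter, Set.mem_setOf_eq]
    have hcard : (Finset.Icc 1 m).card = m := by rw [Nat.card_Icc]; omega
    constructor
    · intro h
      rw [Finset.sum_congr rfl (fun i hi => h i hi), Finset.sum_const, hcard,
        ← Nat.cast_smul_eq_nsmul ℝ, smul_smul, inv_mul_cancel₀ hm0, one_smul]
    · intro hx i hi
      have hsumT : ∑ i ∈ Finset.Icc 1 m, T i x = (m:ℝ) • x := by
        have := congrArg (fun y => (m:ℝ) • y) hx
        simpa [smul_smul, mul_inv_cancel₀ hm0] using this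
      have hsum0 : ∑ i ∈ Finset.Icc 1 m, (T i x - x) = 0 := by
        rw [Finset.sum_sub_distrib, hsumT, Finset.sum_const, hcard,
          ← Nat.cast_smul_eq_nsmul ℝ, sub_self]
      have hkey : ∀ j ∈ Finset.Icc 1 m,
          ‖T j x - x‖^2 + 2 * inner (𝕜 := ℝ) (T j x - x) (x - z) ≤ 0 :=
        fun j hj => key_ineq (hne j hj) (hz j hj) x
      have hs := Finset.sum_le_sum hkey
      rw [Finset.sum_add_distrib, ← Finset.mul_sum, ← sum_inner, hsum0,
        inner_zero_left, mul_zero, add_zero, Finset.sum_const_zero] at hs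
      have hnn : ∀ j ∈ Finset.Icc 1 m, (0:ℝ) ≤ ‖T j x - x‖^2 := fun _ _ => sq_nonneg _
      have := (Finset.sum_eq_zero_iff_of_nonneg hnn).mp (le_antisymm hs (Finset.sum_nonneg hnn)) i hi
      have := sq_eq_zero_iff.mp this
      rw [norm_eq_zero, sub_eq_zero] at this
      exact this
end

section
/- Suppose T : H → H is nonexpansive with unique fixed point x̄, and Id − T is locally strongly monotone around x̄: there exist α, δ > 0 with ⟨x − x̄, x − Tx⟩ ≥ α‖x − x̄‖² for all x ∈ B(x̄;δ). If the solution x of x' = Tx − x enters B(x̄;δ) at time t_0, then ‖x(t) − x̄‖ ≤ ‖x(t_0) − x̄‖ e^{−α(t−t_0)} for t ≥ t_0; moreover every such solution converges strongly to x̄ as t → ∞. -/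
/-! With `f t = ‖x t - x̄‖ ^ 2` we have `f' = -2 ⟪x - x̄, x - T x⟫`, which is at most `-2 α f`
while `x` stays in the ball. On its boundary sphere this gives `f' ≤ -2 α δ ^ 2 < 0`, so a fencing
argument keeps `x` in the ball forever, and Grönwall's inequality then yields
`f t ≤ f t₀ * exp (-2 α (t - t₀))`. -/

open Filter Topology Set Real
open scoped RealInnerProductSpace

section

variable {H : Type*} [NormedAddCommGroup H] [InnerProductSpace ℝ H] {x v : ℝ → H} {c : H}
  {a : ℝ}

theorem hasDerivWithinAt_norm_sub_sq {x' : H} {s : Set ℝ} {t : ℝ}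
    (hx : HasDerivWithinAt x x' s t) :
    HasDerivWithinAt (fun u => ‖x u - c‖ ^ 2) (2 * ⟪x t - c, x'⟫) s t :=
  (hx.sub_const c).norm_sq

theorem continuousOn_norm_sub_sq (hx : ∀ t ∈ Ici a, HasDerivWithinAt x (v t) (Ici a) t)
    (b : ℝ) : ContinuousOn (fun u => ‖x u - c‖ ^ 2) (Icc a b) := fun t ht =>
  (hasDerivWithinAt_norm_sub_sq (hx t ht.1)).continuousWithinAt.mono Icc_subset_Ici_self

theorem hasDerivWithinAt_Ici_norm_sub_sq
    (hx : ∀ t ∈ Ici a, HasDerivWithinAt x (v t) (Ici a) t) {t : ℝ} (ht : t ∈ Ici a) :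
    HasDerivWithinAt (fun u => ‖x u - c‖ ^ 2) (2 * ⟪x t - c, v t⟫) (Ici t) t :=
  hasDerivWithinAt_norm_sub_sq ((hx t ht).mono (Ici_subset_Ici.2 ht))

theorem norm_sub_le_of_inner_neg_of_norm_eq
    (hx : ∀ t ∈ Ici a, HasDerivWithinAt x (v t) (Ici a) t) {r : ℝ} (ha : ‖x a - c‖ ≤ r)
    (hv : ∀ t ∈ Ici a, ‖x t - c‖ = r → ⟪x t - c, v t⟫ < 0) :
    ∀ t ∈ Ici a, ‖x t - c‖ ≤ r := by
  intro t ht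
  have hr : 0 ≤ r := (norm_nonneg _).trans ha
  have hsq : ‖x t - c‖ ^ 2 ≤ r ^ 2 :=
    image_le_of_deriv_right_lt_deriv_boundary (continuousOn_norm_sub_sq hx t)
      (fun u hu => hasDerivWithinAt_Ici_norm_sub_sq hx hu.1) (by gcongr)
      (fun _ => hasDerivAt_const _ _)
      (fun u hu heq => by
        have := hv u hu.1 ((pow_left_inj₀ (norm_nonneg _) hr two_ne_zero).1 heq)
        linarith)
      ⟨ht, le_rfl⟩
  exact (pow_le_pow_iff_left₀ (norm_nonneg _) hr two_ne_zero).1 hsq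

theorem norm_sub_le_mul_exp_of_inner_le
    (hx : ∀ t ∈ Ici a, HasDerivWithinAt x (v t) (Ici a) t) {α : ℝ}
    (hv : ∀ t ∈ Ici a, ⟪x t - c, v t⟫ ≤ -α * ‖x t - c‖ ^ 2) :
    ∀ t ∈ Ici a, ‖x t - c‖ ≤ ‖x a - c‖ * exp (-α * (t - a)) := by
  intro t ht
  have hsq : ‖x t - c‖ ^ 2 ≤ ‖x a - c‖ ^ 2 * exp (-(2 * α) * (t - a)) := by
    rw [← gronwallBound_ε0]
    refine le_gronwallBound_of_liminf_deriv_right_le (continuousOn_norm_sub_sq hx t)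
      (fun u hu _ hr => (hasDerivWithinAt_Ici_norm_sub_sq hx hu.1).liminf_right_slope_le hr)
      le_rfl (fun u hu => ?_) t ⟨ht, le_rfl⟩
    linarith [hv u hu.1]
  refine (pow_le_pow_iff_left₀ (norm_nonneg _) (by positivity) two_ne_zero).1 ?_
  calc ‖x t - c‖ ^ 2 ≤ ‖x a - c‖ ^ 2 * exp (-(2 * α) * (t - a)) := hsq
    _ = (‖x a - c‖ * exp (-α * (t - a))) ^ 2 := by
      rw [mul_pow, ← exp_nat_mul]; ring_nf

end

theorem tendsto_of_norm_sub_le_mul_exp {H : Type*} [NormedAddCommGroup H] {x : ℝ → H} {c : H}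
    {C α a : ℝ} (hα : 0 < α) (hx : ∀ t, a ≤ t → ‖x t - c‖ ≤ C * exp (-α * (t - a))) :
    Tendsto x atTop (𝓝 c) := by
  have hexp : Tendsto (fun t => C * exp (-α * (t - a))) atTop (𝓝 0) := by
    simpa [sub_eq_add_neg] using (tendsto_exp_atBot.comp ((tendsto_atTop_add_const_right _ (-a)
      tendsto_id).const_mul_atTop_of_neg (neg_lt_zero.2 hα))).const_mul C
  exact tendsto_iff_norm_sub_tendsto_zero.2 <| squeeze_zero'
    (Eventually.of_forall fun t => norm_nonneg _) ((eventually_ge_atTop a).mono hx) hexp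

theorem stmt16_general {H : Type*} [NormedAddCommGroup H] [InnerProductSpace ℝ H]
    (T : H → H)
    (xbar : H)
    (α δ : ℝ) (hα : 0 < α) (hδ : 0 < δ)
    (hmono : ∀ y ∈ Metric.closedBall xbar δ,
      α * ‖y - xbar‖ ^ 2 ≤ ⟪y - xbar, y - T y⟫)
    (x : ℝ → H)
    (hx : ∀ t ∈ Set.Ici (0:ℝ), HasDerivWithinAt x (T (x t) - x t) (Set.Ici 0) t)
    (t0 : ℝ) (ht0 : 0 ≤ t0) (henter : x t0 ∈ Metric.closedBall xbar δ) :
    (∀ t, t0 ≤ t → ‖x t - xbar‖ ≤ ‖x t0 - xbar‖ * Real.exp (-α * (t - t0))) ∧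
    Tendsto x atTop (𝓝 xbar) := by
  have hderiv : ∀ t ∈ Ici t0, HasDerivWithinAt x (T (x t) - x t) (Ici t0) t := fun t ht =>
    (hx t (ht0.trans ht)).mono (Ici_subset_Ici.2 ht0)
  have hdiss : ∀ t ∈ Ici t0, ‖x t - xbar‖ ≤ δ →
      ⟪x t - xbar, T (x t) - x t⟫ ≤ -α * ‖x t - xbar‖ ^ 2 := fun t _ ht => by
    have := hmono (x t) (mem_closedBall_iff_norm.2 ht)
    rw [← neg_sub (x t), inner_neg_right]
    linarith
  have hball : ∀ t ∈ Ici t0, ‖x t - xbar‖ ≤ δ :=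
    norm_sub_le_of_inner_neg_of_norm_eq hderiv (mem_closedBall_iff_norm.1 henter)
      fun t ht heq => (hdiss t ht heq.le).trans_lt (by rw [heq]; nlinarith [mul_pos hα hδ])
  have hdecay := norm_sub_le_mul_exp_of_inner_le hderiv fun t ht => hdiss t ht (hball t ht)
  exact ⟨hdecay, tendsto_of_norm_sub_le_mul_exp hα hdecay⟩

theorem stmt16 {H : Type*} [NormedAddCommGroup H] [InnerProductSpace ℝ H]
    (T : H → H) (hT : LipschitzWith 1 T)
    (xbar : H) (hfix : T xbar = xbar) (huniq : ∀ y, T y = y → y = xbar)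
    (α δ : ℝ) (hα : 0 < α) (hδ : 0 < δ)
    (hmono : ∀ y ∈ Metric.closedBall xbar δ,
      α * ‖y - xbar‖ ^ 2 ≤ ⟪y - xbar, y - T y⟫)
    (x : ℝ → H)
    (hx : ∀ t ∈ Set.Ici (0:ℝ), HasDerivWithinAt x (T (x t) - x t) (Set.Ici 0) t)
    (t0 : ℝ) (ht0 : 0 ≤ t0) (henter : x t0 ∈ Metric.closedBall xbar δ) :
    (∀ t, t0 ≤ t → ‖x t - xbar‖ ≤ ‖x t0 - xbar‖ * Real.exp (-α * (t - t0))) ∧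
    Tendsto x atTop (𝓝 xbar) :=
  stmt16_general T xbar α δ hα hδ hmono x hx t0 ht0 henter
end
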